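/- arXiv:1312.3075 — 9 statements merged into one kernel-verified Lean document; each statement's English description precedes it below -/
import Mathlib

section
/- In every connected graph, any two longest paths share at least one common vertex. -/
open SimpleGraph Walk

private lemma appendPath {V : Type*} {G : SimpleGraph V} {a b c : V}
    (p : G.Walk a b) (q : G.Walk b c) (hp : p.IsPath) (hq : q.IsPath)
    (h : ∀ w, w ∈ p.support → w ∈ q.support → w = b) : (p.append q).IsPath := by
  rw [Walk.isPath_def, Walk.support_append]
  refine List.Nodup.append hp.support_nodup hq.support_nodup.tail ?_
  intro w hwp hwq
  have hws : w ∈ q.support := List.mem_of_mem_tail hwq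
  have hwb : w = b := h w hwp hws
  subst hwb
  have hnd := hq.support_nodup
  rw [Walk.support_eq_cons] at hnd
  exact (List.nodup_cons.mp hnd).1 hwq

/-- In every connected graph, any two longest paths share at least one common vertex. -/
theorem stmt0 {V : Type*} [Fintype V] {G : SimpleGraph V} (hG : G.Connected)
    {u v x y : V} (p : G.Walk u v) (q : G.Walk x y) (hp : p.IsPath) (hq : q.IsPath)
    (hpl : ∀ ⦃a b : V⦄ (r : G.Walk a b), r.IsPath → r.length ≤ p.length)
    (hql : ∀ ⦃a b : V⦄ (r : G.Walk a b), r.IsPath → r.length ≤ q.length) :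
    ∃ w : V, w ∈ p.support ∧ w ∈ q.support := by
  classical
  by_contra hcon
  push_neg at hcon
  have hdisj : ∀ w, w ∈ p.support → w ∉ q.support := hcon
  have hL : q.length = p.length := le_antisymm (hpl q hq) (hql p hp)
  obtain ⟨w0⟩ := hG.preconnected u x
  set Pr : ℕ → Prop := fun n => ∃ (a b : V) (r : G.Walk a b),
    a ∈ p.support ∧ b ∈ q.support ∧ r.IsPath ∧ r.length = n with hPrdef
  have hPr : ∃ n, Pr n :=
    ⟨w0.bypass.length, u, x, w0.bypass, p.start_mem_support, q.start_mem_support,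
      w0.bypass_isPath, rfl⟩
  obtain ⟨a, b, r, hap, hbq, hr, hrlen⟩ := Nat.find_spec hPr
  have hmin : ∀ m, m < Nat.find hPr → ¬ Pr m := fun m hm => Nat.find_min hPr hm
  -- r meets p only at a
  have hrp : ∀ c ∈ r.support, c ∈ p.support → c = a := by
    intro c hc hcp
    by_contra hca
    have hspec := congrArg Walk.length (r.take_spec hc)
    rw [Walk.length_append] at hspec
    have htpos : 0 < (r.takeUntil c hc).length := by
      rcases Nat.eq_zero_or_pos (r.takeUntil c hc).length with h0 | h0
      · exact absurd (Walk.eq_of_length_eq_zero h0).symm hca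
      · exact h0
    have hlt : (r.dropUntil c hc).length < Nat.find hPr := by omega
    exact hmin _ hlt ⟨c, b, r.dropUntil c hc, hcp, hbq, hr.dropUntil hc, rfl⟩
  -- r meets q only at b
  have hrq : ∀ c ∈ r.support, c ∈ q.support → c = b := by
    intro c hc hcq
    by_contra hcb
    have hspec := congrArg Walk.length (r.take_spec hc)
    rw [Walk.length_append] at hspec
    have hdpos : 0 < (r.dropUntil c hc).length := by
      rcases Nat.eq_zero_or_pos (r.dropUntil c hc).length with h0 | h0
      · exact absurd (Walk.eq_of_length_eq_zero h0) hcb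
      · exact h0
    have hlt : (r.takeUntil c hc).length < Nat.find hPr := by omega
    exact hmin _ hlt ⟨a, c, r.takeUntil c hc, hap, hcq, hr.takeUntil hc, rfl⟩
  have hab : a ≠ b := fun hEq => hdisj a hap (hEq ▸ hbq)
  have hr1 : 1 ≤ r.length := by
    rcases Nat.eq_zero_or_pos r.length with h0 | h0
    · exact absurd (Walk.eq_of_length_eq_zero h0) hab
    · exact h0
  -- key splicing lemma
  have key : ∀ (s t : V) (pa : G.Walk s a) (qb : G.Walk b t), pa.IsPath → qb.IsPath →
      (∀ w ∈ pa.support, w ∈ p.support) → (∀ w ∈ qb.support, w ∈ q.support) →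
      p.length < pa.length + r.length + qb.length → False := by
    intro s t pa qb hpa hqb hpaS hqbS hlen
    have hrqb : (r.append qb).IsPath :=
      appendPath r qb hr hqb (fun w hwr hwq => hrq w hwr (hqbS w hwq))
    have hP : (pa.append (r.append qb)).IsPath := by
      refine appendPath pa (r.append qb) hpa hrqb ?_
      intro w hwpa hwrq
      rw [Walk.mem_support_append_iff] at hwrq
      rcases hwrq with hwr | hwq
      · exact hrp w hwr (hpaS w hwpa)
      · exact absurd (hqbS w hwq) (hdisj w (hpaS w hwpa))
    have := hpl _ hP
    rw [Walk.length_append, Walk.length_append] at this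
    omega
  -- split p at a and q at b
  have hpsplit : (p.takeUntil a hap).length + (p.dropUntil a hap).length = p.length := by
    have := congrArg Walk.length (p.take_spec hap)
    rwa [Walk.length_append] at this
  have hqsplit : (q.takeUntil b hbq).length + (q.dropUntil b hbq).length = q.length := by
    have := congrArg Walk.length (q.take_spec hbq)
    rwa [Walk.length_append] at this
  have hp1 := hp.takeUntil hap
  have hp2 : (p.dropUntil a hap).reverse.IsPath := (hp.dropUntil hap).reverse
  have hq1 : (q.takeUntil b hbq).reverse.IsPath := (hq.takeUntil hbq).reverse
  have hq2 := hq.dropUntil hbq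
  have hp1S : ∀ w ∈ (p.takeUntil a hap).support, w ∈ p.support :=
    fun w hw => p.support_takeUntil_subset hap hw
  have hp2S : ∀ w ∈ (p.dropUntil a hap).reverse.support, w ∈ p.support := by
    intro w hw
    rw [Walk.support_reverse, List.mem_reverse] at hw
    exact p.support_dropUntil_subset hap hw
  have hq1S : ∀ w ∈ (q.takeUntil b hbq).reverse.support, w ∈ q.support := by
    intro w hw
    rw [Walk.support_reverse, List.mem_reverse] at hw
    exact q.support_takeUntil_subset hbq hw
  have hq2S : ∀ w ∈ (q.dropUntil b hbq).support, w ∈ q.support :=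
    fun w hw => q.support_dropUntil_subset hbq hw
  have hl2 : (p.dropUntil a hap).reverse.length = (p.dropUntil a hap).length :=
    Walk.length_reverse _
  have hm1 : (q.takeUntil b hbq).reverse.length = (q.takeUntil b hbq).length :=
    Walk.length_reverse _
  rcases le_total (p.takeUntil a hap).length (p.dropUntil a hap).length with hpc | hpc <;>
    rcases le_total (q.takeUntil b hbq).length (q.dropUntil b hbq).length with hqc | hqc
  · exact key v y _ _ hp2 hq2 hp2S hq2S (by omega)
  · exact key v x _ _ hp2 hq1 hp2S hq1S (by omega)
  · exact key u y _ _ hp1 hq2 hp1S hq2S (by omega)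
  · exact key u x _ _ hp1 hq1 hp1S hq1S (by omega)
end

section
/- Let X = {x_1, ..., x_{t+1}} be a set of t+1 distinct real numbers and let J_1, ..., J_t be open intervals of the real line with x_k, x_{k+1} ∈ J_k for every 1 ≤ k ≤ t. If x_{i_1} < ... < x_{i_{t+1}} are the elements of X in increasing order, then there is a permutation J_{j_1}, ..., J_{j_t} of the intervals such that x_{i_k}, x_{i_{k+1}} ∈ J_{j_k} for every 1 ≤ k ≤ t. -/
open Finset

/-- A walk `a` on `Fin (n+1)` hits at most (number of transitions) + 1 values. -/
lemma keil_image_card_le {n : ℕ} (a : Fin (n + 1) → ℕ) :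
    (Finset.univ.image a).card ≤
      (Finset.univ.filter (fun j : Fin n => a j.castSucc ≠ a j.succ)).card + 1 := by
  classical
  set T : Finset (Fin n) := Finset.univ.filter (fun j : Fin n => a j.castSucc ≠ a j.succ)
  have key : ∀ m (h : m < n + 1), a ⟨m, h⟩ ∈ insert (a 0) (T.image (fun j => a j.succ)) := by
    intro m
    induction m with
    | zero =>
      intro h
      have : (⟨0, h⟩ : Fin (n + 1)) = 0 := rfl
      rw [this]; exact Finset.mem_insert_self _ _
    | succ m ih =>
      intro h
      have hm : m < n := Nat.lt_of_succ_lt_succ h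
      set j : Fin n := ⟨m, hm⟩ with hj
      have hs : (⟨m + 1, h⟩ : Fin (n + 1)) = j.succ := rfl
      by_cases hEq : a j.castSucc = a j.succ
      · rw [hs, ← hEq]
        exact ih _
      · rw [hs]
        exact Finset.mem_insert_of_mem
          (Finset.mem_image_of_mem _ (by simp [T, hEq]))
  have hsub : Finset.univ.image a ⊆ insert (a 0) (T.image (fun j => a j.succ)) := by
    intro v hv
    obtain ⟨i, _, rfl⟩ := Finset.mem_image.mp hv
    exact key i.1 i.2
  calc (Finset.univ.image a).card
      ≤ (insert (a 0) (T.image (fun j => a j.succ))).card := Finset.card_le_card hsub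
    _ ≤ (T.image (fun j => a j.succ)).card + 1 := Finset.card_insert_le _ _
    _ ≤ T.card + 1 := by gcongr; exact Finset.card_image_le

/-- Keil's reordering lemma: if `x 1, …, x (t+1)` are distinct reals and `J 1, …, J t`
are open intervals with `x k, x (k+1) ∈ J k`, and `σ` sorts the points increasingly,
then the intervals can be permuted so that the `k`-th interval contains the `k`-th and
`(k+1)`-st points in increasing order. -/
theorem stmt1 (t : ℕ) (x : Fin (t + 1) → ℝ) (hx : Function.Injective x)
    (J : Fin t → Set ℝ) (hJ : ∀ k, ∃ a b : ℝ, J k = Set.Ioo a b)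
    (hmem : ∀ k : Fin t, x k.castSucc ∈ J k ∧ x k.succ ∈ J k)
    (σ : Equiv.Perm (Fin (t + 1))) (hσ : StrictMono (x ∘ σ)) :
    ∃ π : Equiv.Perm (Fin t),
      ∀ k : Fin t, x (σ k.castSucc) ∈ J (π k) ∧ x (σ k.succ) ∈ J (π k) := by
  classical
  -- `cross j k` : interval `j` crosses the gap between sorted positions `k` and `k+1`.
  set cross : Fin t → Fin t → Prop := fun j k =>
    ((σ.symm j.castSucc : ℕ) ≤ (k : ℕ) ∧ (k : ℕ) < (σ.symm j.succ : ℕ)) ∨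
    ((σ.symm j.succ : ℕ) ≤ (k : ℕ) ∧ (k : ℕ) < (σ.symm j.castSucc : ℕ)) with hcross
  set tf : Fin t → Finset (Fin t) := fun k => Finset.univ.filter (fun j => cross j k) with htf
  -- Hall's condition
  have hall : ∀ S : Finset (Fin t), S.card ≤ (S.biUnion tf).card := by
    intro S
    set cS : Fin (t + 1) → ℕ := fun q => (S.filter (fun s : Fin t => (s : ℕ) < (q : ℕ))).card with hcS
    set a : Fin (t + 1) → ℕ := fun i => cS (σ.symm i) with ha
    -- the walk `a` hits at least `S.card + 1` values
    have h1 : S.card + 1 ≤ (Finset.univ.image a).card := by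
      have hg : ∀ s ∈ S, cS s.succ ∈ Finset.univ.image a := by
        intro s _
        refine Finset.mem_image.mpr ⟨σ s.succ, Finset.mem_univ _, ?_⟩
        simp [ha]
      have h0 : a (σ 0) = 0 := by
        simp only [ha, cS, Equiv.symm_apply_apply]
        rw [Finset.card_eq_zero]
        refine Finset.filter_eq_empty_iff.mpr ?_
        intro s _; simp
      have hsub : insert 0 (S.image (fun s => cS s.succ)) ⊆ Finset.univ.image a := by
        intro v hv
        rcases Finset.mem_insert.mp hv with rfl | hv
        · exact Finset.mem_image.mpr ⟨σ 0, Finset.mem_univ _, h0⟩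
        · obtain ⟨s, hs, rfl⟩ := Finset.mem_image.mp hv
          exact hg s hs
      have hinj : Set.InjOn (fun s : Fin t => cS s.succ) S := by
        have hmono : ∀ s1 ∈ S, ∀ s2 ∈ S, s1 < s2 → cS s1.succ < cS s2.succ := by
          intro s1 _ s2 hs2 hlt
          apply Finset.card_lt_card
          constructor
          · intro s hs
            simp only [Finset.mem_filter] at hs ⊢
            refine ⟨hs.1, lt_of_lt_of_le hs.2 ?_⟩
            have hlt' : (s1 : ℕ) < (s2 : ℕ) := hlt
            simp only [Fin.val_succ]
            omega
          · intro hsub'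
            have h2 : s2 ∈ S.filter (fun s : Fin t => (s : ℕ) < ((s2.succ : Fin (t+1)) : ℕ)) := by
              simp [hs2, Fin.val_succ]
            have := hsub' h2
            simp only [Finset.mem_filter, Fin.val_succ] at this
            omega
        intro s1 h1 s2 h2 heq
        by_contra hne
        rcases lt_or_gt_of_ne hne with h | h
        · exact absurd heq (Nat.ne_of_lt (hmono s1 h1 s2 h2 h))
        · exact absurd heq.symm (Nat.ne_of_lt (hmono s2 h2 s1 h1 h))
      have h0notin : (0 : ℕ) ∉ S.image (fun s => cS s.succ) := by
        intro h0'
        obtain ⟨s, hs, hval⟩ := Finset.mem_image.mp h0'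
        have : s ∈ S.filter (fun s' : Fin t => (s' : ℕ) < ((s.succ : Fin (t+1)) : ℕ)) := by
          simp [hs, Fin.val_succ]
        have hpos : 0 < cS s.succ := Finset.card_pos.mpr ⟨s, this⟩
        omega
      calc S.card + 1 = (insert 0 (S.image (fun s => cS s.succ))).card := by
            rw [Finset.card_insert_of_notMem h0notin,
              Finset.card_image_of_injOn hinj]
        _ ≤ (Finset.univ.image a).card := Finset.card_le_card hsub
    -- every transition of `a` is an interval crossing some gap in `S`
    have h2 : (Finset.univ.filter (fun j : Fin t => a j.castSucc ≠ a j.succ)) ⊆ S.biUnion tf := by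
      intro j hj
      have hne : cS (σ.symm j.castSucc) ≠ cS (σ.symm j.succ) := by
        simpa [ha] using (Finset.mem_filter.mp hj).2
      have hfind : ∀ p q : Fin (t + 1), cS p < cS q →
          ∃ s ∈ S, (p : ℕ) ≤ (s : ℕ) ∧ (s : ℕ) < (q : ℕ) := by
        intro p q hlt
        have hlt' : (S.filter (fun s : Fin t => (s : ℕ) < (p : ℕ))).card <
            (S.filter (fun s : Fin t => (s : ℕ) < (q : ℕ))).card := hlt
        obtain ⟨s, hsq, hsp⟩ : ∃ s : Fin t, s ∈ S.filter (fun s : Fin t => (s : ℕ) < (q : ℕ)) ∧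
            s ∉ S.filter (fun s : Fin t => (s : ℕ) < (p : ℕ)) := by
          by_contra hcon
          push_neg at hcon
          exact absurd (Finset.card_le_card fun e he => hcon e he) (not_le.mpr hlt')
        simp only [Finset.mem_filter, not_and, not_lt] at hsq hsp
        exact ⟨s, hsq.1, hsp hsq.1, hsq.2⟩
      rcases Nat.lt_or_ge (cS (σ.symm j.castSucc)) (cS (σ.symm j.succ)) with h | h
      · obtain ⟨s, hsS, hs1, hs2⟩ := hfind _ _ h
        refine Finset.mem_biUnion.mpr ⟨s, hsS, ?_⟩
        simp only [htf, Finset.mem_filter, Finset.mem_univ, true_and, hcross]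
        left; omega
      · have h' : cS (σ.symm j.succ) < cS (σ.symm j.castSucc) := lt_of_le_of_ne h (Ne.symm hne)
        obtain ⟨s, hsS, hs1, hs2⟩ := hfind _ _ h'
        refine Finset.mem_biUnion.mpr ⟨s, hsS, ?_⟩
        simp only [htf, Finset.mem_filter, Finset.mem_univ, true_and, hcross]
        right; omega
    have := keil_image_card_le a
    have := Finset.card_le_card h2
    omega
  obtain ⟨f, hfinj, hf⟩ := (Finset.all_card_le_biUnion_card_iff_existsInjective' tf).mp hall
  refine ⟨Equiv.ofBijective f (Finite.injective_iff_bijective.mp hfinj), ?_⟩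
  intro k
  simp only [Equiv.ofBijective_apply]
  set j : Fin t := f k with hjdef
  have hcr : cross j k := by
    have := hf k
    simpa [htf] using this
  obtain ⟨a, b, hab⟩ := hJ j
  have hm := hmem j
  rw [hab] at hm ⊢
  have hmono := hσ.monotone
  have hstep : x (σ k.castSucc) < x (σ k.succ) := hσ (by simp [Fin.lt_def])
  rcases hcr with ⟨h1, h2⟩ | ⟨h1, h2⟩
  · have hA : x j.castSucc ≤ x (σ k.castSucc) := by
      have := hmono (show (σ.symm j.castSucc) ≤ k.castSucc by
        simp only [Fin.le_def, Fin.coe_castSucc]; omega)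
      simpa using this
    have hB : x (σ k.succ) ≤ x j.succ := by
      have := hmono (show k.succ ≤ (σ.symm j.succ) by
        simp only [Fin.le_def, Fin.val_succ]; omega)
      simpa using this
    obtain ⟨⟨ha1, ha2⟩, hb1, hb2⟩ := hm
    exact ⟨⟨by linarith, by linarith⟩, by linarith, by linarith⟩
  · have hA : x j.succ ≤ x (σ k.castSucc) := by
      have := hmono (show (σ.symm j.succ) ≤ k.castSucc by
        simp only [Fin.le_def, Fin.coe_castSucc]; omega)
      simpa using this
    have hB : x (σ k.succ) ≤ x j.castSucc := by
      have := hmono (show k.succ ≤ (σ.symm j.castSucc) by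
        simp only [Fin.le_def, Fin.val_succ]; omega)
      simpa using this
    obtain ⟨⟨ha1, ha2⟩, hb1, hb2⟩ := hm
    exact ⟨⟨by linarith, by linarith⟩, by linarith, by linarith⟩
end

section
/- Let J_1, ..., J_t be open intervals of ℝ with J_k ∩ J_{k+1} ≠ ∅ for all 1 ≤ k ≤ t−1, and let x_1 < x_2 < ... < x_{t+1} be real numbers with x_k, x_{k+1} ∈ J_k for all k. If p < q and the intervals [x_p, x_{p+1}] and [x_q, x_{q+1}] are both contained in J_p ∩ J_q, then the sequence obtained by swapping J_p and J_q, i.e. (J_1, ..., J_{p−1}, J_q, J_{p+1}, ..., J_{q−1}, J_p, J_{q+1}, ..., J_t), also satisfies that consecutive intervals intersect. -/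
/-- Swapping two intervals `J p` and `J q` of a chain of open intervals, when the closed
intervals `[x p, x (p+1)]` and `[x q, x (q+1)]` are both contained in `J p ∩ J q`,
again yields a sequence in which consecutive intervals intersect. -/
theorem stmt2 (t : ℕ) (J : ℕ → Set ℝ) (x : ℕ → ℝ)
    (hJopen : ∀ k < t, ∃ a b : ℝ, J k = Set.Ioo a b)
    (hchain : ∀ k, k + 1 < t → (J k ∩ J (k + 1)).Nonempty)
    (hx : ∀ k, k + 1 ≤ t → x k < x (k + 1))
    (hmem : ∀ k < t, x k ∈ J k ∧ x (k + 1) ∈ J k)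
    (p q : ℕ) (hpq : p < q) (hqt : q < t)
    (hsubp : Set.Icc (x p) (x (p + 1)) ⊆ J p ∩ J q)
    (hsubq : Set.Icc (x q) (x (q + 1)) ⊆ J p ∩ J q) :
    ∀ k, k + 1 < t →
      ((J ∘ Equiv.swap p q) k ∩ (J ∘ Equiv.swap p q) (k + 1)).Nonempty := by
  intro k hk
  have hxp : x p ≤ x (p+1) := le_of_lt (hx p (by omega))
  have hxq : x q ≤ x (q+1) := le_of_lt (hx q (by omega))
  have hp1 : x (p+1) ∈ J p ∩ J q := hsubp ⟨hxp, le_refl _⟩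
  have hp0 : x p ∈ J p ∩ J q := hsubp ⟨le_refl _, hxp⟩
  have hq1 : x (q+1) ∈ J p ∩ J q := hsubq ⟨hxq, le_refl _⟩
  have hq0 : x q ∈ J p ∩ J q := hsubq ⟨le_refl _, hxq⟩
  simp only [Function.comp]
  rcases eq_or_ne k p with h | hkp
  · rw [h]
    rw [Equiv.swap_apply_left]
    rcases eq_or_ne (p+1) q with h | h
    · rw [h, Equiv.swap_apply_right]
      exact ⟨x p, hp0.2, hp0.1⟩
    · rw [Equiv.swap_apply_of_ne_of_ne (by omega) h]
      exact ⟨x (p+1), hp1.2, (hmem (p+1) (by omega)).1⟩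
  · rcases eq_or_ne k q with h | hkq
    · rw [h]
      rw [Equiv.swap_apply_right, Equiv.swap_apply_of_ne_of_ne (by omega) (by omega)]
      exact ⟨x (q+1), hq1.1, (hmem (q+1) (by omega)).1⟩
    · rw [Equiv.swap_apply_of_ne_of_ne hkp hkq]
      rcases eq_or_ne (k+1) p with h | h1
      · rw [h, Equiv.swap_apply_left]
        exact ⟨x p, h ▸ (hmem k (by omega)).2, hp0.2⟩
      · rcases eq_or_ne (k+1) q with h | h2
        · rw [h, Equiv.swap_apply_right]
          exact ⟨x q, h ▸ (hmem k (by omega)).2, hq0.1⟩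
        · rw [Equiv.swap_apply_of_ne_of_ne h1 h2]
          exact hchain k hk
end

section
/- Let F be a finite collection of open intervals of ℝ and let P be a longest chain in F (a sequence of distinct intervals of F of maximum length such that consecutive intervals intersect), with support Supp P as defined below. Then an interval A ∈ F appears in P if and only if A ∩ Supp P ≠ ∅. -/
/-!
If `A ∉ P` meets `supp P` at `x`, then `x` lies in the first or the last interval of `P`, or in
two consecutive intervals of `P`; correspondingly `A` can be put in front of `P`, behind it, or
between those two intervals, and this yields a longer chain. Conversely, an interval `J_k` of `P`
meets `supp P`: `J_1` and `J_t` are contained in the support, an inner `J_k` meets `J_{k+1}` inside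
`J_k ∩ J_{k+1}`, and for `k = t - 1`, where this intersection is not part of the support, one uses
`J_{k-1} ∩ J_k` instead (which lies in `J_1` when `k = 2`).
-/

/-- The support of a chain `P = (J_1, …, J_t)`:
`J_1 ∪ J_t ∪ ⋃_{2 ≤ i ≤ t-2} (J_i ∩ J_{i+1})` (1-indexed). -/
def supp (P : List (Set ℝ)) : Set ℝ :=
  P.getD 0 ∅ ∪ P.getD (P.length - 1) ∅ ∪
    ⋃ i ∈ Finset.Ico 1 (P.length - 2), (P.getD i ∅ ∩ P.getD (i + 1) ∅)

namespace List

variable {α : Type*}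

theorem IsChain.take_append_cons_drop {R : α → α → Prop} {l : List α} {a : α} {n : ℕ}
    (hl : l.IsChain R) (hn : n ≤ l.length) (hprev : ∀ h : 0 < n, R l[n - 1] a)
    (hnext : ∀ h : n < l.length, R a l[n]) :
    (l.take n ++ a :: l.drop n).IsChain R := by
  refine (hl.take n).append ((hl.drop n).cons ?_) ?_
  · intro y hy
    obtain ⟨h, rfl⟩ := getElem?_eq_some_iff.mp (head?_drop ▸ hy)
    exact hnext h
  · intro x hx y hy
    obtain rfl : y = a := by simpa using hy.symm
    rcases Nat.eq_zero_or_pos n with rfl | hpos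
    · simp at hx
    · rw [getLast?_take, if_neg hpos.ne', getElem?_eq_getElem (by omega)] at hx
      obtain rfl : x = l[n - 1] := by simpa using hx.symm
      exact hprev hpos

theorem mem_getD_empty_iff {l : List (Set α)} {i : ℕ} {x : α} :
    x ∈ l.getD i ∅ ↔ ∃ h : i < l.length, x ∈ l[i] := by
  by_cases h : i < l.length <;> simp [h]

end List

open List

section

variable {α : Type*}

def IsChainIn (F : Finset (Set α)) (Q : List (Set α)) : Prop :=
  Q.Nodup ∧ (∀ J ∈ Q, J ∈ F) ∧ Q.IsChain fun A B => (A ∩ B).Nonempty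

theorem IsChainIn.take_append_cons_drop {F : Finset (Set α)} {P : List (Set α)} {A : Set α}
    {n : ℕ} (hP : IsChainIn F P) (hA : A ∈ F) (hAP : A ∉ P) (hn : n ≤ P.length)
    (hprev : ∀ h : 0 < n, (P[n - 1] ∩ A).Nonempty)
    (hnext : ∀ h : n < P.length, (A ∩ P[n]).Nonempty) :
    IsChainIn F (P.take n ++ A :: P.drop n) := by
  obtain ⟨hnd, hmem, hch⟩ := hP
  have hperm : (P.take n ++ A :: P.drop n).Perm (A :: P) := by
    simpa only [take_append_drop] using perm_middle (a := A) (l₁ := P.take n) (l₂ := P.drop n)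
  refine ⟨hperm.nodup_iff.mpr (nodup_cons.mpr ⟨hAP, hnd⟩), fun J hJ => ?_,
    hch.take_append_cons_drop hn hprev hnext⟩
  rcases mem_cons.mp (hperm.mem_iff.mp hJ) with rfl | hJ
  exacts [hA, hmem J hJ]

end

theorem mem_supp_iff {P : List (Set ℝ)} {x : ℝ} :
    x ∈ supp P ↔ (∃ h : 0 < P.length, x ∈ P[0]) ∨
      (∃ h : 0 < P.length, x ∈ P[P.length - 1]) ∨
      ∃ i, ∃ h : i + 2 < P.length, 1 ≤ i ∧ x ∈ P[i] ∧ x ∈ P[i + 1] := by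
  simp only [supp, Set.mem_union, Set.mem_iUnion, Set.mem_inter_iff, mem_getD_empty_iff,
    Finset.mem_Ico, exists_prop, or_assoc]
  refine or_congr Iff.rfl
    (or_congr ⟨fun ⟨_, hx⟩ => ⟨by omega, hx⟩, fun ⟨_, hx⟩ => ⟨by omega, hx⟩⟩ ?_)
  constructor
  · rintro ⟨i, ⟨hi1, hi2⟩, ⟨_, hx⟩, ⟨_, hx'⟩⟩
    exact ⟨i, by omega, hi1, hx, hx'⟩
  · rintro ⟨i, h, hi1, hx, hx'⟩
    exact ⟨i, ⟨hi1, by omega⟩, ⟨by omega, hx⟩, ⟨by omega, hx'⟩⟩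

theorem exists_insertion_of_mem_supp {P : List (Set ℝ)} {x : ℝ} (hx : x ∈ supp P) :
    ∃ n, ∃ hn : n ≤ P.length,
      (∀ h : 0 < n, x ∈ P[n - 1]) ∧ ∀ h : n < P.length, x ∈ P[n] := by
  rcases mem_supp_iff.mp hx with ⟨h, hx⟩ | ⟨h, hx⟩ | ⟨i, h, -, hx, hx'⟩
  · exact ⟨0, by omega, by omega, fun _ => hx⟩
  · exact ⟨P.length, le_rfl, fun _ => hx, by omega⟩
  · exact ⟨i + 1, by omega, fun _ => hx, fun _ => hx'⟩

theorem inter_supp_nonempty_of_getElem {P : List (Set ℝ)}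
    (hP : P.IsChain fun A B => (A ∩ B).Nonempty) {k : ℕ} (hk : k < P.length)
    (hne : P[k].Nonempty) : (P[k] ∩ supp P).Nonempty := by
  obtain ⟨x, hx⟩ := hne
  by_cases hk0 : k = 0
  · subst hk0
    exact ⟨x, hx, mem_supp_iff.mpr (.inl ⟨hk, hx⟩)⟩
  by_cases hklast : k = P.length - 1
  · subst hklast
    exact ⟨x, hx, mem_supp_iff.mpr (.inr (.inl ⟨by omega, hx⟩))⟩
  by_cases hk2 : k + 2 < P.length
  · obtain ⟨y, hy, hy'⟩ := hP.getElem k (by omega)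
    exact ⟨y, hy, mem_supp_iff.mpr (.inr (.inr ⟨k, hk2, by omega, hy, hy'⟩))⟩
  obtain ⟨j, rfl⟩ : ∃ j, k = j + 1 := ⟨k - 1, by omega⟩
  obtain ⟨y, hy, hy'⟩ := hP.getElem j hk
  refine ⟨y, hy', mem_supp_iff.mpr ?_⟩
  rcases Nat.eq_zero_or_pos j with rfl | hj
  · exact .inl ⟨by omega, hy⟩
  · exact .inr (.inr ⟨j, by omega, hj, hy, hy'⟩)

theorem mem_of_inter_supp_nonempty {F : Finset (Set ℝ)} {P : List (Set ℝ)} {A : Set ℝ}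
    (hP : IsChainIn F P) (hlong : ∀ Q, IsChainIn F Q → Q.length ≤ P.length) (hA : A ∈ F)
    (h : (A ∩ supp P).Nonempty) : A ∈ P := by
  by_contra hAP
  obtain ⟨x, hxA, hxP⟩ := h
  obtain ⟨n, hn, hprev, hnext⟩ := exists_insertion_of_mem_supp hxP
  have := hlong _ (hP.take_append_cons_drop hA hAP hn (fun h => ⟨x, hprev h, hxA⟩)
    (fun h => ⟨x, hxA, hnext h⟩))
  simp only [length_append, length_take, length_cons, length_drop] at this
  omega

/-- An interval `A ∈ F` belongs to a longest chain `P` in `F` if and only if `A` meets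
the support of `P`. -/
theorem stmt5 (F : Finset (Set ℝ)) (hF : ∀ A ∈ F, ∃ a b : ℝ, a < b ∧ A = Set.Ioo a b)
    (P : List (Set ℝ))
    (hP : P.Nodup ∧ (∀ J ∈ P, J ∈ F) ∧ List.Chain' (fun A B => (A ∩ B).Nonempty) P)
    (hlong : ∀ Q : List (Set ℝ),
      (Q.Nodup ∧ (∀ J ∈ Q, J ∈ F) ∧ List.Chain' (fun A B => (A ∩ B).Nonempty) Q) →
      Q.length ≤ P.length)
    (A : Set ℝ) (hA : A ∈ F) :
    A ∈ P ↔ (A ∩ supp P).Nonempty := by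
  refine ⟨fun hAP => ?_, mem_of_inter_supp_nonempty hP hlong hA⟩
  obtain ⟨k, hk, rfl⟩ := getElem_of_mem hAP
  obtain ⟨a, b, hab, hA_eq⟩ := hF _ hA
  exact inter_supp_nonempty_of_getElem hP.2.2 hk (hA_eq ▸ Set.nonempty_Ioo.mpr hab)
end

section
/- Let F be a finite collection of open arcs of a circle C whose union is C, and let K = {K_0, ..., K_{n−1}} ⊆ F be a subcollection covering C with n minimal and with no K_i contained in another arc of F, cyclically ordered clockwise. If P is a longest chain in F, then P ∩ K is nonempty and the set of indices {i : K_i ∈ P} is a contiguous (cyclically consecutive) subset of ℤ_n. -/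
noncomputable section

/-- The circle, modeled as `ℝ / ℤ`. -/
abbrev Circ : Type := AddCircle (1 : ℝ)

/-- The open arc starting at `a` and running clockwise for length `d`. -/
def arc (a : Circ) (d : ℝ) : Set Circ :=
  (fun t : ℝ => a + (↑t : Circ)) '' Set.Ioo 0 d

/-- An open (proper) arc of the circle. -/
def IsArc (A : Set Circ) : Prop :=
  ∃ (a : Circ) (d : ℝ), 0 < d ∧ d < 1 ∧ A = arc a d

/-- A chain in `F`: a list of distinct members of `F` with consecutive members
intersecting. -/
def ArcChain (F : Set (Set Circ)) (P : List (Set Circ)) : Prop :=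
  P.Nodup ∧ (∀ A ∈ P, A ∈ F) ∧ List.Chain' (fun A B => (A ∩ B).Nonempty) P

/-- A longest chain in `F`. -/
def IsLongestArcChain (F : Set (Set Circ)) (P : List (Set Circ)) : Prop :=
  ArcChain F P ∧ ∀ Q, ArcChain F Q → Q.length ≤ P.length

/-- The points `p 0, …, p (n-1)` occur consecutively in clockwise order on the circle. -/
def CyclicallyOrdered {n : ℕ} (p : Fin n → Circ) : Prop :=
  ∃ (a : Circ) (t : Fin n → ℝ), StrictMono t ∧ (∀ i, t i ∈ Set.Ico (0 : ℝ) 1) ∧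
    ∀ i, p i = a + (↑(t i) : Circ)

/-- The open clockwise arc strictly between the points `p` and `q`. -/
def arcBetween (p q : Circ) : Set Circ :=
  {x | ∃ s u : ℝ, 0 < s ∧ s < u ∧ u < 1 ∧ x = p + (↑s : Circ) ∧ q = p + (↑u : Circ)}

/-- `A` precedes `B` in the list `L`. -/
def Precedes (L : List (Set Circ)) (A B : Set Circ) : Prop :=
  ∃ i j : ℕ, i < j ∧ j < L.length ∧ L.getD i ∅ = A ∧ L.getD j ∅ = B

/-- `ΔK_i = {x : ℓ(K_{i+1}) < x < r(K_i)}`, for arcs `K i = arc (c i) (d i)`. -/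
def deltaK {n : ℕ} [NeZero n] (c : Fin n → Circ) (d : Fin n → ℝ) (i : Fin n) :
    Set Circ :=
  arcBetween (c (i + 1)) (c i + (↑(d i) : Circ))

/-!
Minimality of the cover gives every `K i` a private point `p i`, and the lifts of these points
increase with `i` within a single turn. A longest chain meets `K`: an arc `K i` through a point of
the first arc of `P` could otherwise be prepended. If the indices met by `P` were not cyclically
contiguous, there would be cyclically ordered `i₁, i₂, i₃, i₄` with `K i₁, K i₃ ∈ P` and
`K i₂, K i₄ ∉ P`. The points `p i₂` and `p i₄` cut the circle into two open arcs. A point shared by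
consecutive arcs of `P` avoids `K i₂ ∪ K i₄`, for otherwise that arc could be inserted, and no arc
of `F` has points outside `K i₂ ∪ K i₄` on both sides, for it would then contain `K i₂` or `K i₄`,
which are maximal in `F`. Hence the side of such points is constant along `P`, yet `p i₁` and
`p i₃` lie on different sides.
-/

open Set

lemma coe_add_one (r : ℝ) : ((r + 1 : ℝ) : Circ) = r := by
  simp

lemma mem_arc {x y : Circ} {L : ℝ} : y ∈ arc x L ↔ ∃ t ∈ Ioo 0 L, x + ↑t = y := Iff.rfl

lemma mem_arc_add_coe_iff {x y : Circ} {s L : ℝ} :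
    y ∈ arc (x + ↑s) L ↔ ∃ r ∈ Ioo s (s + L), y = x + ↑r := by
  rw [mem_arc]
  constructor
  · rintro ⟨t, ht, rfl⟩
    exact ⟨s + t, ⟨by linarith [ht.1], by linarith [ht.2]⟩, by rw [AddCircle.coe_add, add_assoc]⟩
  · rintro ⟨r, hr, rfl⟩
    refine ⟨r - s, ⟨by linarith [hr.1], by linarith [hr.2]⟩, ?_⟩
    rw [AddCircle.coe_sub, add_assoc, add_sub_cancel]

lemma add_coe_mem_arc {x : Circ} {s L r : ℝ} (hr : r ∈ Ioo s (s + L)) :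
    x + ↑r ∈ arc (x + ↑s) L :=
  mem_arc_add_coe_iff.2 ⟨r, hr, rfl⟩

lemma arc_subset_arc {x : Circ} {s t δ : ℝ} (hs : 0 ≤ s) (ht : t ≤ δ) :
    arc (x + ↑s) (t - s) ⊆ arc x δ := by
  intro y hy
  obtain ⟨r, hr, rfl⟩ := mem_arc_add_coe_iff.1 hy
  exact ⟨r, ⟨by linarith [hr.1], by linarith [hr.2]⟩, rfl⟩

lemma isOpen_arc (x : Circ) (L : ℝ) : IsOpen (arc x L) :=
  ((isOpenMap_add_left x).comp QuotientAddGroup.isOpenMap_coe) _ isOpen_Ioo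

lemma isPreconnected_arc (x : Circ) (L : ℝ) : IsPreconnected (arc x L) :=
  isPreconnected_Ioo.image _ (by fun_prop)

lemma IsArc.nonempty {A : Set Circ} (hA : IsArc A) : A.Nonempty := by
  obtain ⟨x, d, hd, -, rfl⟩ := hA
  exact ⟨_, d / 2, ⟨by linarith, by linarith⟩, rfl⟩

lemma disjoint_arc_arc {x : Circ} {L : ℝ} (hL : L ≤ 1) :
    Disjoint (arc x L) (arc (x + ↑L) (1 - L)) := by
  rw [Set.disjoint_left]
  rintro _ ⟨s, hs, rfl⟩ ht
  obtain ⟨r, hr, he⟩ := mem_arc_add_coe_iff.1 ht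
  rw [add_right_inj, AddCircle.coe_eq_coe_iff_of_mem_Ico (a := 0) ⟨hs.1.le, by linarith [hs.2]⟩
      ⟨by linarith [hr.1, hs.1, hs.2], by linarith [hr.2]⟩] at he
  linarith [hr.1, hs.2]

lemma mem_arc_union_arc {x y : Circ} {L : ℝ} (hL0 : 0 ≤ L) (hL1 : L ≤ 1) (hx : y ≠ x)
    (hxL : y ≠ x + ↑L) : y ∈ arc x L ∪ arc (x + ↑L) (1 - L) := by
  obtain ⟨r, hr, hry⟩ := AddCircle.eq_coe_Ico (y - x)
  rw [eq_sub_iff_add_eq'] at hry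
  subst hry
  have hr0 : r ≠ 0 := by rintro rfl; simp at hx
  rcases lt_or_gt_of_ne (show r ≠ L by rintro rfl; exact hxL rfl) with h | h
  · exact Or.inl ⟨r, ⟨lt_of_le_of_ne hr.1 (Ne.symm hr0), h⟩, rfl⟩
  · exact Or.inr (add_coe_mem_arc ⟨h, by linarith [hr.2]⟩)

lemma IsPreconnected.mem_or_mem_of_meets_arcs {J : Set Circ} (hJ : IsPreconnected J) {x : Circ}
    {L : ℝ} (hL0 : 0 ≤ L) (hL1 : L ≤ 1) (h₁ : (J ∩ arc x L).Nonempty)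
    (h₂ : (J ∩ arc (x + ↑L) (1 - L)).Nonempty) : x ∈ J ∨ x + ↑L ∈ J := by
  by_contra! h
  obtain ⟨y, -, hy₁, hy₂⟩ := hJ _ _ (isOpen_arc x L) (isOpen_arc _ _)
    (fun y hy => mem_arc_union_arc hL0 hL1 (ne_of_mem_of_not_mem hy h.1)
      (ne_of_mem_of_not_mem hy h.2)) h₁ h₂
  exact Set.disjoint_left.1 (disjoint_arc_arc hL1) hy₁ hy₂

lemma IsPreconnected.subset_arc {K : Set Circ} (hK : IsPreconnected K) {x : Circ} {L : ℝ}
    (hL0 : 0 ≤ L) (hL1 : L ≤ 1) (hx : x ∉ K) (hxL : x + ↑L ∉ K) (h : (K ∩ arc x L).Nonempty) :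
    K ⊆ arc x L := by
  intro y hy
  by_contra hyx
  have hy' : y ∈ arc (x + ↑L) (1 - L) :=
    (mem_arc_union_arc hL0 hL1 (ne_of_mem_of_not_mem hy hx)
      (ne_of_mem_of_not_mem hy hxL)).resolve_left hyx
  rcases hK.mem_or_mem_of_meets_arcs hL0 hL1 h ⟨y, hy, hy'⟩ with h' | h'
  exacts [hx h', hxL h']

lemma IsArc.exists_segment {A : Set Circ} (hA : IsArc A) {u v : Circ} (hu : u ∈ A)
    (hv : v ∈ A) : ∃ J, IsPreconnected J ∧ u ∈ J ∧ v ∈ J ∧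
      ∀ K, IsPreconnected K → u ∉ K → v ∉ K → (K ∩ J).Nonempty → K ⊆ A := by
  obtain ⟨b, δ, -, hδ1, rfl⟩ := hA
  obtain ⟨s, hs, rfl⟩ := hu
  obtain ⟨t, ht, rfl⟩ := hv
  wlog hst : s ≤ t generalizing s t
  · obtain ⟨J, hJ, hvJ, huJ, hJK⟩ := this t ht s hs (le_of_not_ge hst)
    exact ⟨J, hJ, huJ, hvJ, fun K hK hu hv => hJK K hK hv hu⟩
  refine ⟨(fun r : ℝ => b + ↑r) '' Icc s t, isPreconnected_Icc.image _ (by fun_prop),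
    ⟨s, left_mem_Icc.2 hst, rfl⟩, ⟨t, right_mem_Icc.2 hst, rfl⟩, ?_⟩
  rintro K hK hsK htK ⟨_, hrK, r, hr, rfl⟩
  have hrs : s < r := lt_of_le_of_ne hr.1 (by rintro rfl; exact hsK hrK)
  have hrt : r < t := lt_of_le_of_ne hr.2 (by rintro rfl; exact htK hrK)
  have hbt : b + ↑s + ↑(t - s) = b + ↑t := by rw [add_assoc, ← AddCircle.coe_add, add_sub_cancel]
  refine (hK.subset_arc (by linarith) (by linarith [hs.1, ht.2]) hsK (hbt ▸ htK)
    ⟨_, hrK, add_coe_mem_arc ⟨hrs, by linarith⟩⟩).trans (arc_subset_arc hs.1.le ht.2.le)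

lemma IsArc.subset_or_subset_of_crosses {A : Set Circ} (hA : IsArc A) {u v : Circ} (hu : u ∈ A)
    (hv : v ∈ A) {K₁ K₂ : Set Circ} (hK₁ : IsPreconnected K₁) (hK₂ : IsPreconnected K₂)
    {x : Circ} {L : ℝ} (hL0 : 0 ≤ L) (hL1 : L ≤ 1) (hx : x ∈ K₁) (hxL : x + ↑L ∈ K₂)
    (hu₁ : u ∉ K₁) (hu₂ : u ∉ K₂) (hv₁ : v ∉ K₁) (hv₂ : v ∉ K₂) (hux : u ∈ arc x L)
    (hvx : v ∈ arc (x + ↑L) (1 - L)) : K₁ ⊆ A ∨ K₂ ⊆ A := by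
  obtain ⟨J, hJ, huJ, hvJ, hJK⟩ := hA.exists_segment hu hv
  rcases hJ.mem_or_mem_of_meets_arcs hL0 hL1 ⟨u, huJ, hux⟩ ⟨v, hvJ, hvx⟩ with h | h
  · exact Or.inl (hJK K₁ hK₁ hu₁ hv₁ ⟨x, hx, h⟩)
  · exact Or.inr (hJK K₂ hK₂ hu₂ hv₂ ⟨_, hxL, h⟩)

section Chains

variable {F : Set (Set Circ)} {P : List (Set Circ)}

lemma IsLongestArcChain.ne_nil (hP : IsLongestArcChain F P) {A : Set Circ} (hA : A ∈ F) :
    P ≠ [] := by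
  rintro rfl
  have := hP.2 [A] ⟨List.nodup_singleton A, by simpa using hA, List.isChain_singleton A⟩
  simp at this

lemma IsLongestArcChain.mem_of_inter_head_nonempty {A : Set Circ} {l : List (Set Circ)}
    (hP : IsLongestArcChain F (A :: l)) {B : Set Circ} (hB : B ∈ F) (hBA : (B ∩ A).Nonempty) :
    B ∈ A :: l := by
  by_contra hBP
  have hQ : ArcChain F (B :: A :: l) :=
    ⟨List.nodup_cons.2 ⟨hBP, hP.1.1⟩, by simpa [hB] using hP.1.2.1,
      List.IsChain.cons_cons hBA hP.1.2.2⟩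
  simpa using hP.2 _ hQ

lemma IsLongestArcChain.exists_mem_of_iUnion_eq_univ (hF : ∀ A ∈ F, IsArc A)
    (hP : IsLongestArcChain F P) {ι : Type*} {K : ι → Set Circ} (hKF : ∀ i, K i ∈ F)
    (hKcov : ⋃ i, K i = Set.univ) : ∃ i, K i ∈ P := by
  have hcover (z : Circ) : ∃ i, z ∈ K i := Set.mem_iUnion.1 (hKcov ▸ Set.mem_univ z)
  obtain ⟨i₀, -⟩ := hcover 0
  obtain ⟨A, l, rfl⟩ := List.exists_cons_of_ne_nil (hP.ne_nil (hKF i₀))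
  obtain ⟨z, hz⟩ := (hF A (hP.1.2.1 A List.mem_cons_self)).nonempty
  obtain ⟨i, hi⟩ := hcover z
  exact ⟨i, hP.mem_of_inter_head_nonempty (hKF i) ⟨z, hi, hz⟩⟩

lemma IsLongestArcChain.disjoint_inter_of_notMem {l₁ l₂ : List (Set Circ)} {A A' : Set Circ}
    (hP : IsLongestArcChain F (l₁ ++ A :: A' :: l₂)) {B : Set Circ} (hB : B ∈ F)
    (hBP : B ∉ l₁ ++ A :: A' :: l₂) : Disjoint (A ∩ A') B := by
  rw [Set.disjoint_left]
  rintro x hx hxB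
  obtain ⟨hnodup, hmem, hchain⟩ := hP.1
  rw [List.Chain', List.isChain_append_cons_cons] at hchain
  have hQ : ArcChain F (l₁ ++ A :: B :: A' :: l₂) := by
    refine ⟨?_, ?_, ?_⟩
    · rw [show l₁ ++ A :: B :: A' :: l₂ = (l₁ ++ [A]) ++ B :: A' :: l₂ by simp, List.nodup_middle]
      exact List.nodup_cons.2 ⟨by simpa using hBP, by simpa using hnodup⟩
    · intro C hC
      simp only [List.mem_append, List.mem_cons] at hC hmem
      rcases hC with hC | rfl | rfl | hC
      · exact hmem C (Or.inl hC)
      · exact hmem C (Or.inr (Or.inl rfl))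
      · exact hB
      · exact hmem C (Or.inr (Or.inr hC))
    · rw [List.Chain', List.isChain_append_cons_cons]
      exact ⟨hchain.1, ⟨x, hx.1, hxB⟩, List.IsChain.cons_cons ⟨x, hxB, hx.2⟩ hchain.2.2⟩
  simpa using hP.2 _ hQ

lemma IsLongestArcChain.isChain_inter_diff (hP : IsLongestArcChain F P) {G : Set Circ}
    (hG : ∀ x ∈ G, ∃ B ∈ F, B ∉ P ∧ x ∈ B) :
    P.IsChain fun A B => ((A ∩ B) \ G).Nonempty := by
  rw [List.isChain_iff_forall_rel_of_append_cons_cons]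
  rintro A A' l₁ l₂ rfl
  obtain ⟨x, hx⟩ := List.isChain_iff_forall_rel_of_append_cons_cons.1 hP.1.2.2 rfl
  refine ⟨x, hx, fun hxG => ?_⟩
  obtain ⟨B, hBF, hBP, hxB⟩ := hG x hxG
  exact Set.disjoint_left.1 (hP.disjoint_inter_of_notMem hBF hBP) hx hxB

end Chains

lemma List.IsChain.false_of_separated {α : Type*} {P : List (Set α)} {G U₁ U₂ : Set α}
    (hchain : P.IsChain fun A B => ((A ∩ B) \ G).Nonempty) (hU : _root_.Disjoint U₁ U₂)
    (hcov : Gᶜ ⊆ U₁ ∪ U₂) (hside : ∀ A ∈ P, ∀ u ∈ A \ G, ∀ v ∈ A \ G, u ∈ U₁ → v ∉ U₂)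
    {A B : Set α} (hA : A ∈ P) (hB : B ∈ P) (hAU : (A \ G ∩ U₁).Nonempty)
    (hBU : (B \ G ∩ U₂).Nonempty) : False := by
  have hside' : ∀ C ∈ P, ∀ x ∈ C \ G, ((C \ G ∩ U₁).Nonempty ↔ x ∈ U₁) := by
    refine fun C hC x hx => ⟨fun ⟨u, hu, huU⟩ => ?_, fun hxU => ⟨x, hx, hxU⟩⟩
    exact (hcov hx.2).resolve_right (hside C hC u hu x hx huU)
  have hiff : P.IsChain fun C D => ((C \ G ∩ U₁).Nonempty ↔ (D \ G ∩ U₁).Nonempty) :=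
    hchain.imp_of_mem_imp fun C D hC hD ⟨x, ⟨hxC, hxD⟩, hxG⟩ =>
      (hside' C hC x ⟨hxC, hxG⟩).trans (hside' D hD x ⟨hxD, hxG⟩).symm
  have hne : P ≠ [] := List.ne_nil_of_mem hA
  have hconst := hiff.induction (fun C => (C \ G ∩ U₁).Nonempty ↔ (P.head hne \ G ∩ U₁).Nonempty)
    P (fun C D hCD hC => hCD.symm.trans hC) (fun _ => Iff.rfl)
  obtain ⟨v, hv, hvU⟩ := hBU
  have hBU₁ := (hconst B hB).2 ((hconst A hA).1 hAU)
  exact Set.disjoint_left.1 hU ((hside' B hB v hv).1 hBU₁) hvU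

lemma exists_mem_forall_ne_notMem_of_minimal_cover {α : Type*} {F : Set (Set α)} {n : ℕ}
    {K : Fin n → Set α} (hKF : ∀ i, K i ∈ F) (hKcov : ⋃ i, K i = Set.univ)
    (hmin : ∀ (m : ℕ) (K' : Fin m → Set α), (∀ j, K' j ∈ F) → ⋃ j, K' j = Set.univ → n ≤ m)
    (t : Fin n) : ∃ x ∈ K t, ∀ s, s ≠ t → x ∉ K s := by
  by_contra! h
  obtain ⟨m, rfl⟩ : ∃ m, n = m + 1 := Nat.exists_eq_succ_of_ne_zero (Fin.pos t).ne'
  have hcov : ⋃ j, K (t.succAbove j) = Set.univ := by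
    refine Set.eq_univ_of_forall fun x => ?_
    obtain ⟨s, hs⟩ := Set.mem_iUnion.1 (hKcov ▸ Set.mem_univ x)
    obtain ⟨s, hst, hs⟩ : ∃ s, s ≠ t ∧ x ∈ K s := by
      by_cases hst : s = t
      · exact h x (hst ▸ hs)
      · exact ⟨s, hst, hs⟩
    obtain ⟨j, rfl⟩ := Fin.exists_succAbove_eq hst
    exact Set.mem_iUnion.2 ⟨j, hs⟩
  have := hmin m _ (fun j => hKF _) hcov
  omega

lemma lt_and_lt_add_one_of_notMem {n : ℕ} {K : Fin n → Set Circ} {x : Circ} {τ d r : Fin n → ℝ}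
    (hτ : StrictMono τ) (hτ1 : ∀ i, τ i ∈ Ico (0 : ℝ) 1)
    (hK : ∀ i, K i = arc (x + ↑(τ i)) (d i)) (hr : ∀ i, r i ∈ Ioo (τ i) (τ i + d i))
    (hpriv : ∀ i j, j ≠ i → x + ↑(r i) ∉ K j) {i j : Fin n} (hij : i < j) :
    r i < r j ∧ r j < r i + 1 := by
  constructor
  · by_contra! h
    refine hpriv j i hij.ne (hK i ▸ add_coe_mem_arc ⟨?_, ?_⟩)
    · linarith [hτ hij, (hr j).1]
    · linarith [(hr i).2]
  · by_contra! h
    refine hpriv i j hij.ne' (hK j ▸ coe_add_one (r i) ▸ add_coe_mem_arc ⟨?_, ?_⟩)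
    · linarith [(hτ1 i).1, (hτ1 j).2, (hr i).1]
    · linarith [(hr j).2]

section CyclicInterval

variable {n : ℕ} [NeZero n]

def IsCyclicInterval (S : Set (Fin n)) : Prop :=
  ∃ (a : Fin n) (m : ℕ), m ≤ n ∧ ∀ i, i ∈ S ↔ ∃ j < m, i = a + Fin.ofNat n j

lemma exists_lt_eq_add_ofNat_iff {a i : Fin n} {m : ℕ} (hm : m ≤ n) :
    (∃ j < m, i = a + Fin.ofNat n j) ↔ (i - a).val < m := by
  constructor
  · rintro ⟨j, hj, rfl⟩
    rw [add_sub_cancel_left, Fin.val_ofNat, Nat.mod_eq_of_lt (by omega)]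
    exact hj
  · exact fun h => ⟨(i - a).val, h, by rw [Fin.ofNat_val_eq_self, add_sub_cancel]⟩

lemma isCyclicInterval_iff {S : Set (Fin n)} :
    IsCyclicInterval S ↔ ∃ (a : Fin n) (m : ℕ), m ≤ n ∧ ∀ i, i ∈ S ↔ (i - a).val < m := by
  refine exists_congr fun a => exists_congr fun m => and_congr_right fun hm => ?_
  simp only [exists_lt_eq_add_ofNat_iff hm]

lemma IsCyclicInterval.compl {S : Set (Fin n)} (hS : IsCyclicInterval S) :
    IsCyclicInterval Sᶜ := by
  rw [isCyclicInterval_iff] at hS ⊢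
  obtain ⟨a, m, hm, hS⟩ := hS
  refine ⟨a + Fin.ofNat n m, n - m, by omega, fun i => ?_⟩
  rw [Set.mem_compl_iff, hS, sub_add_eq_sub_sub]
  rcases hm.lt_or_eq with hm | rfl
  · have hval : (Fin.ofNat n m).val = m := by rw [Fin.val_ofNat, Nat.mod_eq_of_lt hm]
    rcases le_or_gt (Fin.ofNat n m) (i - a) with h | h
    · rw [Fin.coe_sub_iff_le.2 h]; rw [Fin.le_def] at h; omega
    · rw [Fin.coe_sub_iff_lt.2 h]; rw [Fin.lt_def] at h; omega
  · simp

lemma Set.OrdConnected.isCyclicInterval {S : Set (Fin n)} (hS : S.OrdConnected) :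
    IsCyclicInterval S := by
  rw [isCyclicInterval_iff]
  rcases S.eq_empty_or_nonempty with rfl | hne
  · exact ⟨0, 0, Nat.zero_le n, by simp⟩
  obtain ⟨lo, hlo, hlo_le⟩ := S.exists_min_image id S.toFinite hne
  obtain ⟨hi, hhi, hle_hi⟩ := S.exists_max_image id S.toFinite hne
  simp only [id] at hlo_le hle_hi
  have hlohi := Fin.le_def.1 (hlo_le hi hhi)
  refine ⟨lo, hi.val - lo.val + 1, by omega, fun i => ⟨fun hiS => ?_, fun h => ?_⟩⟩
  · have h₁ := Fin.le_def.1 (hle_hi i hiS)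
    rw [Fin.coe_sub_iff_le.2 (hlo_le i hiS)]
    omega
  · rcases le_or_gt lo i with hloi | hilo
    · rw [Fin.coe_sub_iff_le.2 hloi] at h
      exact hS.out hlo hhi ⟨hloi, Fin.le_def.2 (by omega)⟩
    · rw [Fin.coe_sub_iff_lt.2 hilo] at h
      omega

lemma exists_alternating_of_not_isCyclicInterval {S : Set (Fin n)} (hS : ¬IsCyclicInterval S) :
    ∃ a b c d : Fin n, a < b ∧ b < c ∧ c < d ∧
      (a ∈ S ∧ b ∉ S ∧ c ∈ S ∧ d ∉ S ∨ a ∉ S ∧ b ∈ S ∧ c ∉ S ∧ d ∈ S) := by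
  have h₁ : ¬S.OrdConnected := fun h => hS h.isCyclicInterval
  have h₂ : ¬Sᶜ.OrdConnected := fun h => hS (by simpa using h.isCyclicInterval.compl)
  simp only [Set.ordConnected_def, Set.not_subset, not_forall, exists_prop] at h₁ h₂
  obtain ⟨lo, hlo, hi, hhi, o, ⟨hlo_o, ho_hi⟩, ho⟩ := h₁
  obtain ⟨lo', hlo', hi', hhi', y, ⟨hlo'_y, hy_hi'⟩, hy⟩ := h₂
  simp only [Set.mem_compl_iff, not_not] at hlo' hhi' hy
  have hlt {a b : Fin n} (h : a ≤ b) (hab : a ∈ S ↔ b ∉ S) : a < b :=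
    lt_of_le_of_ne h fun h' => by subst h'; tauto
  rcases lt_or_gt_of_ne (show lo ≠ lo' by rintro rfl; exact hlo' hlo) with h | h
  · exact ⟨lo, lo', y, hi', h, hlt hlo'_y (by tauto), hlt hy_hi' (by tauto),
      Or.inl ⟨hlo, hlo', hy, hhi'⟩⟩
  · exact ⟨lo', lo, o, hi, h, hlt hlo_o (by tauto), hlt ho_hi (by tauto),
      Or.inr ⟨hlo', hlo, ho, hhi⟩⟩

end CyclicInterval

lemma false_of_alternating {F : Set (Set Circ)} (hF : ∀ A ∈ F, IsArc A) {P : List (Set Circ)}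
    (hP : IsLongestArcChain F P) {ι : Type*} {K : ι → Set Circ}
    (hK : ∀ i, IsPreconnected (K i)) (hKF : ∀ i, K i ∈ F)
    (hnosub : ∀ i, ∀ A ∈ F, K i ⊆ A → K i = A) {p : ι → Circ} (hp : ∀ i, p i ∈ K i)
    (hpriv : ∀ i j, j ≠ i → p i ∉ K j) {i₁ i₂ i₃ i₄ : ι} (h₁ : K i₁ ∈ P) (h₂ : K i₂ ∉ P)
    (h₃ : K i₃ ∈ P) (h₄ : K i₄ ∉ P) {x : Circ} {y₁ y₂ y₃ y₄ : ℝ} (hy₁ : p i₁ = x + ↑y₁)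
    (hy₂ : p i₂ = x + ↑y₂) (hy₃ : p i₃ = x + ↑y₃) (hy₄ : p i₄ = x + ↑y₄) (h₁₂ : y₁ < y₂)
    (h₂₃ : y₂ < y₃) (h₃₄ : y₃ < y₄) (h₄₁ : y₄ < y₁ + 1) : False := by
  set L := y₂ - y₄ + 1
  have hL : p i₂ = p i₄ + ↑L := by
    rw [hy₂, hy₄, add_assoc, ← AddCircle.coe_add, show y₄ + L = y₂ + 1 by ring, coe_add_one]
  have hne {i j : ι} (hi : K i ∈ P) (hj : K j ∉ P) : i ≠ j := fun h => hj (h ▸ hi)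
  have hGP : ∀ z ∈ K i₂ ∪ K i₄, ∃ B ∈ F, B ∉ P ∧ z ∈ B := by
    rintro z (hz | hz)
    exacts [⟨_, hKF i₂, h₂, hz⟩, ⟨_, hKF i₄, h₄, hz⟩]
  refine (hP.isChain_inter_diff hGP).false_of_separated (U₁ := arc (p i₄) L)
    (U₂ := arc (p i₂) (1 - L)) (hL ▸ disjoint_arc_arc (by linarith)) ?_ ?_ h₁ h₃ ?_ ?_
  · intro z hz
    simp only [Set.mem_compl_iff, Set.mem_union, not_or] at hz
    exact hL ▸ mem_arc_union_arc (by linarith) (by linarith)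
      (fun h => hz.2 (h ▸ hp i₄)) (fun h => hz.1 (h ▸ hL ▸ hp i₂))
  · rintro A hA u ⟨huA, huG⟩ v ⟨hvA, hvG⟩ hu hv
    simp only [Set.mem_union, not_or] at huG hvG
    rcases (hF A (hP.1.2.1 A hA)).subset_or_subset_of_crosses huA hvA (hK i₄) (hK i₂)
      (by linarith) (by linarith) (hp i₄) (hL ▸ hp i₂) huG.2 huG.1 hvG.2 hvG.1 hu (hL ▸ hv)
      with hsub | hsub
    · exact huG.2 (hnosub i₄ A (hP.1.2.1 A hA) hsub ▸ huA)
    · exact huG.1 (hnosub i₂ A (hP.1.2.1 A hA) hsub ▸ huA)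
  · refine ⟨p i₁, ⟨hp i₁, ?_⟩, ?_⟩
    · simp only [Set.mem_union, not_or]
      exact ⟨hpriv _ _ (hne h₁ h₂).symm, hpriv _ _ (hne h₁ h₄).symm⟩
    · rw [hy₁, hy₄, ← coe_add_one y₁]
      exact add_coe_mem_arc ⟨by linarith, by linarith⟩
  · refine ⟨p i₃, ⟨hp i₃, ?_⟩, ?_⟩
    · simp only [Set.mem_union, not_or]
      exact ⟨hpriv _ _ (hne h₃ h₂).symm, hpriv _ _ (hne h₃ h₄).symm⟩
    · rw [hy₃, hy₂]
      exact add_coe_mem_arc ⟨by linarith, by linarith⟩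

theorem stmt6_general (F : Finset (Set Circ)) (hF : ∀ A ∈ F, IsArc A)
    (n : ℕ) [NeZero n] (K : Fin n → Set Circ) (c : Fin n → Circ) (d : Fin n → ℝ)
    (hKarc : ∀ i, K i = arc (c i) (d i) ∧ 0 < d i ∧ d i < 1)
    (hKF : ∀ i, K i ∈ F)
    (hKcov : (⋃ i, K i) = Set.univ)
    (hmin : ∀ (m : ℕ) (K' : Fin m → Set Circ), (∀ j, K' j ∈ F) →
      (⋃ j, K' j) = Set.univ → n ≤ m)
    (hnosub : ∀ i, ∀ A ∈ F, K i ⊆ A → K i = A)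
    (hord : CyclicallyOrdered c)
    (P : List (Set Circ)) (hP : IsLongestArcChain (↑F) P) :
    (∃ i, K i ∈ P) ∧ ∃ (a : Fin n) (m : ℕ), m ≤ n ∧
      ∀ i : Fin n, (K i ∈ P ↔ ∃ j < m, i = a + (Fin.ofNat n j)) := by
  obtain ⟨x, τ, hτ, hτ1, hc⟩ := hord
  have hK (i : Fin n) : K i = arc (x + ↑(τ i)) (d i) := by rw [(hKarc i).1, hc i]
  choose p hpK hpriv using
    exists_mem_forall_ne_notMem_of_minimal_cover (F := (↑F : Set (Set Circ))) hKF hKcov hmin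
  choose r hr hpr using fun i => mem_arc_add_coe_iff.1 (hK i ▸ hpK i)
  have hlift {i j : Fin n} (hij : i < j) : r i < r j ∧ r j < r i + 1 :=
    lt_and_lt_add_one_of_notMem hτ hτ1 hK hr (fun i j hij => hpr i ▸ hpriv i j hij) hij
  have hKpre (i : Fin n) : IsPreconnected (K i) := hK i ▸ isPreconnected_arc _ _
  refine ⟨hP.exists_mem_of_iUnion_eq_univ hF hKF hKcov, ?_⟩
  change IsCyclicInterval {i | K i ∈ P}
  by_contra h
  obtain ⟨i₁, i₂, i₃, i₄, h₁₂, h₂₃, h₃₄, hpat⟩ :=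
    exists_alternating_of_not_isCyclicInterval (S := {i | K i ∈ P}) h
  have h₁₄ := (hlift (h₁₂.trans (h₂₃.trans h₃₄))).2
  rcases hpat with ⟨h₁, h₂, h₃, h₄⟩ | ⟨h₁, h₂, h₃, h₄⟩
  · exact false_of_alternating hF hP hKpre hKF hnosub hpK hpriv h₁ h₂ h₃ h₄
      (hpr i₁) (hpr i₂) (hpr i₃) (hpr i₄) (hlift h₁₂).1 (hlift h₂₃).1 (hlift h₃₄).1 h₁₄
  -- Rotate the pattern to start at `i₂`; then `p i₁` is lifted to `r i₁ + 1`.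
  · exact false_of_alternating hF hP hKpre hKF hnosub hpK hpriv h₂ h₃ h₄ h₁
      (hpr i₂) (hpr i₃) (hpr i₄) (by rw [coe_add_one, hpr i₁])
      (hlift h₂₃).1 (hlift h₃₄).1 h₁₄ (by linarith [(hlift h₁₂).1])

/-- Balister et al., Lemma: a longest chain in `F` meets the minimal circle cover `K`,
and the set of indices `i` with `K i ∈ P` is cyclically contiguous in `ℤ/n`. -/
theorem stmt6 (F : Finset (Set Circ)) (hF : ∀ A ∈ F, IsArc A)
    (hcov : ⋃₀ (↑F : Set (Set Circ)) = Set.univ)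
    (n : ℕ) [NeZero n] (K : Fin n → Set Circ) (c : Fin n → Circ) (d : Fin n → ℝ)
    (hKarc : ∀ i, K i = arc (c i) (d i) ∧ 0 < d i ∧ d i < 1)
    (hKF : ∀ i, K i ∈ F) (hKinj : Function.Injective K)
    (hKcov : (⋃ i, K i) = Set.univ)
    (hmin : ∀ (m : ℕ) (K' : Fin m → Set Circ), (∀ j, K' j ∈ F) →
      (⋃ j, K' j) = Set.univ → n ≤ m)
    (hnosub : ∀ i, ∀ A ∈ F, K i ⊆ A → K i = A)
    (hord : CyclicallyOrdered c)
    (P : List (Set Circ)) (hP : IsLongestArcChain (↑F) P) :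
    (∃ i, K i ∈ P) ∧ ∃ (a : Fin n) (m : ℕ), m ≤ n ∧
      ∀ i : Fin n, (K i ∈ P ↔ ∃ j < m, i = a + (Fin.ofNat n j)) :=
  stmt6_general F hF n K c d hKarc hKF hKcov hmin hnosub hord P hP

end
end

section
/- If G is a connected interval graph, then there is a vertex contained in every longest path of G. -/
/-!
Two longest paths `P`, `Q` of a connected graph meet: otherwise a shortest path joining them
would splice the longer halves of `P` and `Q` into a path longer than both.

Write the intervals as `(a v, b v)`. Let `M` be the least value, over longest paths `P`, of
`max_{v ∈ P} b v`, attained on `P₀`, and let `c` have least `a c` among the vertices with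
`a c < M ≤ b c`. If a longest path `Q` avoided `c`, every `Q`-neighbour `u` of a vertex `w` with
`a w < M ≤ b w` would be adjacent to `w` and, as `c` cannot be inserted between `w` and `u`, not to
`c`; this forces `M ≤ a u`. Hence `M ≤ b v` propagates along `Q`, and at a common vertex `z` of `Q`
and `P₀` (where `b z = M`) it yields a `Q`-neighbour `u` of `z` with `M ≤ a u < b z = M`.
-/

open Set

namespace SimpleGraph

variable {V : Type*} {G : SimpleGraph V}

namespace Walk

theorem IsPath.append_of_support_inter {u v w : V} {p : G.Walk u v} {q : G.Walk v w}
    (hp : p.IsPath) (hq : q.IsPath) (h : ∀ z ∈ p.support, z ∈ q.support → z = v) :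
    (p.append q).IsPath := by
  rw [isPath_def, support_append]
  refine hp.support_nodup.append hq.support_nodup.tail fun z hzp hzq => ?_
  obtain rfl := h z hzp (List.mem_of_mem_tail hzq)
  have hq' := hq.support_nodup
  rw [← cons_tail_support, List.nodup_cons] at hq'
  exact hq'.1 hzq

theorem IsPath.exists_isPath_length_succ {v : V} :
    ∀ {x y : V} {p : G.Walk x y}, p.IsPath → v ∉ p.support → ∀ d ∈ p.darts,
      G.Adj v d.fst → G.Adj v d.snd →
      ∃ q : G.Walk x y, q.IsPath ∧ q.length = p.length + 1 ∧ q.support ⊆ v :: p.support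
  | _, _, .nil, _, _, d, hd, _, _ => by simp at hd
  | _, _, .cons h p, hp, hv, d, hd, h₁, h₂ => by
    rw [cons_isPath_iff] at hp
    simp only [support_cons, List.mem_cons, not_or] at hv
    rw [darts_cons, List.mem_cons] at hd
    rcases hd with rfl | hd
    · refine ⟨cons h₁.symm (cons h₂ p), ?_, rfl, by simp⟩
      simp only [cons_isPath_iff, support_cons, List.mem_cons, not_or]
      exact ⟨⟨hp.1, hv.2⟩, Ne.symm hv.1, hp.2⟩
    · obtain ⟨q, hq, hlen, hsupp⟩ := hp.1.exists_isPath_length_succ hv.2 d hd h₁ h₂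
      refine ⟨cons h q, ?_, by simp [hlen], ?_⟩
      · refine (cons_isPath_iff _ _).2 ⟨hq, fun hx => ?_⟩
        rcases List.mem_cons.1 (hsupp hx) with hx | hx
        · exact hv.1 hx.symm
        · exact hp.2 hx
      · rw [support_cons, support_cons]
        exact List.cons_subset.2 ⟨by simp, fun z hz => by
          rcases List.mem_cons.1 (hsupp hz) with h | h <;> simp [h]⟩

theorem mem_iff_start_mem_of_forall_darts {S : Set V} :
    ∀ {u v : V} (p : G.Walk u v), (∀ d ∈ p.darts, d.fst ∈ S ↔ d.snd ∈ S) →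
      ∀ z ∈ p.support, (z ∈ S ↔ u ∈ S)
  | _, _, .nil, _, z, hz => by rw [mem_support_nil_iff.1 hz]
  | _, _, .cons h p, hS, z, hz => by
    simp only [darts_cons, List.mem_cons, forall_eq_or_imp] at hS
    rcases List.mem_cons.1 hz with rfl | hz
    · rfl
    · exact (p.mem_iff_start_mem_of_forall_darts hS.2 z hz).trans hS.1.symm

theorem IsPath.exists_isPath_to_of_mem_support {x y u : V} {p : G.Walk x y} (hp : p.IsPath)
    (hu : u ∈ p.support) :
    ∃ (e : V) (q : G.Walk e u), q.IsPath ∧ q.support ⊆ p.support ∧ p.length ≤ 2 * q.length := by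
  classical
  have hlen := congrArg length (p.take_spec hu)
  rw [length_append] at hlen
  rcases le_total (p.takeUntil u hu).length (p.dropUntil u hu).length with hle | hle
  · refine ⟨y, (p.dropUntil u hu).reverse, (hp.dropUntil hu).reverse, ?_,
      by rw [length_reverse]; omega⟩
    simpa using p.support_dropUntil_subset_support hu
  · exact ⟨x, p.takeUntil u hu, hp.takeUntil hu, p.support_takeUntil_subset_support hu, by omega⟩

def IsLongestPath {u v : V} (p : G.Walk u v) : Prop :=
  p.IsPath ∧ ∀ ⦃a b : V⦄ (q : G.Walk a b), q.IsPath → q.length ≤ p.length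

theorem IsLongestPath.not_adj_of_mem_edges {x y v w u : V} {p : G.Walk x y}
    (hp : p.IsLongestPath) (hv : v ∉ p.support) (he : s(w, u) ∈ p.edges) (hw : G.Adj v w) :
    ¬G.Adj v u := by
  intro hu
  obtain ⟨d, hd, hde⟩ := List.mem_map.1 he
  obtain ⟨q, hq, hlen, -⟩ : ∃ q : G.Walk x y,
      q.IsPath ∧ q.length = p.length + 1 ∧ q.support ⊆ v :: p.support := by
    rcases Sym2.eq_iff.1 hde with ⟨rfl, rfl⟩ | ⟨rfl, rfl⟩
    · exact hp.1.exists_isPath_length_succ hv d hd hw hu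
    · exact hp.1.exists_isPath_length_succ hv d hd hu hw
  have := hp.2 q hq
  omega

theorem IsLongestPath.not_nil {x y u w : V} {p : G.Walk x y} (hp : p.IsLongestPath)
    (h : G.Adj u w) : ¬p.Nil := by
  rw [← length_eq_zero_iff]
  have := hp.2 h.toWalk (by simp [h.ne])
  simp only [Adj.length_toWalk] at this
  omega

end Walk

theorem Preconnected.exists_isPath_between (hG : G.Preconnected) {S T : Set V}
    (hS : S.Nonempty) (hT : T.Nonempty) :
    ∃ u ∈ S, ∃ w ∈ T, ∃ r : G.Walk u w, r.IsPath ∧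
      (∀ z ∈ r.support, z ∈ S → z = u) ∧ (∀ z ∈ r.support, z ∈ T → z = w) := by
  classical
  have hex : ∃ n, ∃ u ∈ S, ∃ w ∈ T, ∃ r : G.Walk u w, r.IsPath ∧ r.length = n := by
    obtain ⟨⟨u, hu⟩, ⟨w, hw⟩⟩ := And.intro hS hT
    obtain ⟨r, hr⟩ := (hG u w).exists_isPath
    exact ⟨_, u, hu, w, hw, r, hr, rfl⟩
  obtain ⟨u, hu, w, hw, r, hr, hlen⟩ := Nat.find_spec hex
  refine ⟨u, hu, w, hw, r, hr, fun z hz hzS => ?_, fun z hz hzT => ?_⟩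
  · by_contra hzu
    exact Nat.find_min hex (hlen ▸ r.length_dropUntil_lt_length hz hzu)
      ⟨z, hzS, w, hw, r.dropUntil z hz, hr.dropUntil hz, rfl⟩
  · by_contra hzw
    exact Nat.find_min hex (hlen ▸ r.length_takeUntil_lt_length hz hzw)
      ⟨u, hu, z, hzT, r.takeUntil z hz, hr.takeUntil hz, rfl⟩

theorem Preconnected.exists_mem_support_of_isLongestPath (hG : G.Preconnected)
    {x₁ y₁ x₂ y₂ : V} {p : G.Walk x₁ y₁} {q : G.Walk x₂ y₂} (hp : p.IsLongestPath)
    (hq : q.IsLongestPath) : ∃ z ∈ p.support, z ∈ q.support := by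
  by_contra! hpq
  obtain ⟨u, hu, w, hw, r, hr, hru, hrw⟩ :=
    hG.exists_isPath_between (S := {z | z ∈ p.support}) (T := {z | z ∈ q.support})
      ⟨x₁, p.start_mem_support⟩ ⟨x₂, q.start_mem_support⟩
  obtain ⟨e, p', hp', hp'p, hp'len⟩ := hp.1.exists_isPath_to_of_mem_support hu
  obtain ⟨f, q', hq', hq'q, hq'len⟩ := hq.1.exists_isPath_to_of_mem_support hw
  have hr_pos : r.length ≠ 0 := fun h => hpq u hu (Walk.eq_of_length_eq_zero h ▸ hw)
  have hp'r : (p'.append r).IsPath :=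
    hp'.append_of_support_inter hr fun z hzp hzr => hru z hzr (hp'p hzp)
  have hlong : ((p'.append r).append q'.reverse).IsPath := by
    refine hp'r.append_of_support_inter hq'.reverse fun z hz hzq => ?_
    rw [Walk.support_reverse, List.mem_reverse] at hzq
    rcases (Walk.mem_support_append_iff _ _).1 hz with hzp | hzr
    · exact absurd (hq'q hzq) (hpq z (hp'p hzp))
    · exact hrw z hzr (hq'q hzq)
  have := hp.2 _ hlong
  have := hp.2 q hq.1
  have := hq.2 p hp.1
  simp only [Walk.length_append, Walk.length_reverse] at *
  omega

theorem exists_isLongestPath_forall_exists_le [Finite V] [Nonempty V] {β : Type*} [LinearOrder β]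
    (f : V → β) :
    ∃ (x y : V) (p : G.Walk x y), p.IsLongestPath ∧ ∃ t ∈ p.support, (∀ u ∈ p.support, f u ≤ f t) ∧
      ∀ ⦃x' y' : V⦄ (q : G.Walk x' y'), q.IsLongestPath → ∃ v ∈ q.support, f t ≤ f v := by
  set T := {t | ∃ (x y : V) (p : G.Walk x y), p.IsLongestPath ∧ t ∈ p.support ∧
    ∀ u ∈ p.support, f u ≤ f t}
  have hT : ∀ ⦃x y : V⦄ (q : G.Walk x y), q.IsLongestPath → ∃ v ∈ q.support, v ∈ T :=
    fun x y q hq => (exists_max_image {v | v ∈ q.support} f q.support.finite_toSet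
      ⟨x, q.start_mem_support⟩).imp fun v hv => ⟨hv.1, x, y, q, hq, hv⟩
  obtain ⟨x, y, p, hp, hmax⟩ := Walk.exists_isPath_forall_isPath_length_le_length G
  obtain ⟨v, -, hv⟩ := hT p ⟨hp, fun _ _ q hq => hmax _ _ q hq⟩
  obtain ⟨t, ⟨x, y, p, hp, ht, htmax⟩, htmin⟩ := T.exists_min_image f T.toFinite ⟨v, hv⟩
  exact ⟨x, y, p, hp, t, ht, htmax, fun x' y' q hq =>
    (hT q hq).imp fun v hv => ⟨hv.1, htmin v hv.2⟩⟩

def IsIntervalRepresentation (G : SimpleGraph V) (a b : V → ℝ) : Prop :=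
  ∀ u w, u ≠ w → (G.Adj u w ↔ (Ioo (a u) (b u) ∩ Ioo (a w) (b w)).Nonempty)

namespace IsIntervalRepresentation

variable {a b : V → ℝ} {u w : V}

theorem lt_of_adj (hG : G.IsIntervalRepresentation a b) (h : G.Adj u w) : a u < b w := by
  obtain ⟨x, hxu, hxw⟩ := (hG u w h.ne).1 h
  exact hxu.1.trans hxw.2

theorem lt_of_adj_left (hG : G.IsIntervalRepresentation a b) (h : G.Adj u w) : a u < b u := by
  obtain ⟨x, hxu, -⟩ := (hG u w h.ne).1 h
  exact hxu.1.trans hxu.2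

theorem adj_of_mem_Ioc (hG : G.IsIntervalRepresentation a b) {M : ℝ} (huw : u ≠ w)
    (hu : M ∈ Ioc (a u) (b u)) (hw : M ∈ Ioc (a w) (b w)) : G.Adj u w := by
  obtain ⟨x, hx, hxM⟩ := exists_between (max_lt hu.1 hw.1)
  rw [max_lt_iff] at hx
  exact (hG u w huw).2 ⟨x, ⟨hx.1, hxM.trans_le hu.2⟩, hx.2, hxM.trans_le hw.2⟩

theorem le_or_le_of_not_adj (hG : G.IsIntervalRepresentation a b) (huw : u ≠ w)
    (h : ¬G.Adj u w) (hu : a u < b u) (hw : a w < b w) : b u ≤ a w ∨ b w ≤ a u := by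
  by_contra! h'
  refine h ((hG u w huw).2 ?_)
  rw [Ioo_inter_Ioo, nonempty_Ioo]
  exact max_lt (lt_min hu h'.2) (lt_min h'.1 hw)

variable {M : ℝ} {c : V}

theorem le_of_adj_of_not_adj (hG : G.IsIntervalRepresentation a b) (hab : ∀ v, a v < b v)
    (hc : M ∈ Ioc (a c) (b c)) (hc_min : ∀ v, M ∈ Ioc (a v) (b v) → a c ≤ a v)
    (hw : M ∈ Ioc (a w) (b w)) (hwu : G.Adj w u) (hcu : ¬G.Adj c u) (huc : u ≠ c) :
    M ≤ a u := by
  rcases hG.le_or_le_of_not_adj huc.symm hcu (hab c) (hab u) with h | h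
  · exact hc.2.trans h
  · linarith [hG.lt_of_adj hwu, hc_min w hw]

theorem le_of_adj_of_le (hG : G.IsIntervalRepresentation a b) (hab : ∀ v, a v < b v)
    (hwu : G.Adj w u) (h : M ∈ Ioc (a w) (b w) → M ≤ a u) (hw : M ≤ b w) : M ≤ b u := by
  by_cases haw : a w < M
  · exact (h ⟨haw, hw⟩).trans (hab u).le
  · exact (not_lt.1 haw).trans (hG.lt_of_adj hwu).le

theorem mem_support_of_isLongestPath (hG : G.IsIntervalRepresentation a b)
    (hab : ∀ v, a v < b v) (hc : M ∈ Ioc (a c) (b c))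
    (hc_min : ∀ v, M ∈ Ioc (a v) (b v) → a c ≤ a v) {x y : V} {q : G.Walk x y}
    (hq : q.IsLongestPath) (hq_nil : ¬q.Nil) (hq_ge : ∃ v ∈ q.support, M ≤ b v)
    (hq_le : ∃ z ∈ q.support, b z ≤ M) : c ∈ q.support := by
  by_contra hcq
  have hkey : ∀ w u, s(w, u) ∈ q.edges → M ∈ Ioc (a w) (b w) → M ≤ a u := by
    intro w u he hw
    have hcw : G.Adj c w :=
      hG.adj_of_mem_Ioc (fun h => hcq (h ▸ q.fst_mem_support_of_mem_edges he)) hc hw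
    exact hG.le_of_adj_of_not_adj hab hc hc_min hw (q.adj_of_mem_edges he)
      (hq.not_adj_of_mem_edges hcq he hcw) fun h => hcq (h ▸ q.snd_mem_support_of_mem_edges he)
  have hclosed : ∀ d ∈ q.darts, d.fst ∈ {v | M ≤ b v} ↔ d.snd ∈ {v | M ≤ b v} := by
    intro d hd
    have he : s(d.fst, d.snd) ∈ q.edges := List.mem_map_of_mem hd
    exact ⟨hG.le_of_adj_of_le hab d.adj (hkey _ _ he),
      hG.le_of_adj_of_le hab d.adj.symm (hkey _ _ (Sym2.eq_swap ▸ he))⟩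
  obtain ⟨v, hv, hMv⟩ := hq_ge
  obtain ⟨z, hz, hzM⟩ := hq_le
  have hMz : M ≤ b z := ((q.mem_iff_start_mem_of_forall_darts hclosed z hz).trans
    (q.mem_iff_start_mem_of_forall_darts hclosed v hv).symm).2 hMv
  obtain ⟨e, he, hze⟩ := (Walk.mem_support_iff_exists_mem_edges_of_not_nil hq_nil).1 hz
  obtain ⟨u, rfl⟩ := Sym2.mem_iff_exists.1 hze
  have := hkey z u he ⟨(hab z).trans_le hzM, hMz⟩
  linarith [hG.lt_of_adj (q.adj_of_mem_edges he).symm]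

theorem exists_mem_support_forall_isLongestPath [Finite V] [Nontrivial V]
    (hG : G.IsIntervalRepresentation a b) (hconn : G.Preconnected) :
    ∃ c, ∀ ⦃x y : V⦄ (q : G.Walk x y), q.IsLongestPath → c ∈ q.support := by
  have hnbr (v : V) : ∃ w, G.Adj v w := by simpa [IsIsolated] using hconn.not_isIsolated v
  have hab (v : V) : a v < b v := hG.lt_of_adj_left (hnbr v).choose_spec
  obtain ⟨u⟩ := ‹Nontrivial V›.to_nonempty
  obtain ⟨w, huw⟩ := hnbr u
  obtain ⟨x, y, p, hp, t, ht, htp, hq_ge⟩ := exists_isLongestPath_forall_exists_le (G := G) b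
  obtain ⟨c, hc, hc_min⟩ := Set.exists_min_image {v | b t ∈ Ioc (a v) (b v)} a (Set.toFinite _)
    ⟨t, hab t, le_rfl⟩
  refine ⟨c, fun x' y' q hq => hG.mem_support_of_isLongestPath hab hc hc_min hq
    (hq.not_nil huw) (hq_ge q hq) ?_⟩
  obtain ⟨z, hzp, hzq⟩ := hconn.exists_mem_support_of_isLongestPath hp hq
  exact ⟨z, hzq, htp z hzp⟩

end IsIntervalRepresentation

end SimpleGraph

/-- If `G` is a connected interval graph, then there is a vertex contained in every
longest path of `G`. -/
theorem stmt11 {V : Type*} [Fintype V] (G : SimpleGraph V) (φ : V → Set ℝ)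
    (hφ : ∀ v, ∃ a b : ℝ, φ v = Set.Ioo a b)
    (hadj : ∀ u w : V, u ≠ w → (G.Adj u w ↔ (φ u ∩ φ w).Nonempty))
    (hconn : G.Connected) :
    ∃ v : V, ∀ (x y : V) (p : G.Walk x y), p.IsPath →
      (∀ ⦃a b : V⦄ (q : G.Walk a b), q.IsPath → q.length ≤ p.length) →
      v ∈ p.support := by
  cases subsingleton_or_nontrivial V with
  | inl _ =>
    obtain ⟨v⟩ := hconn.nonempty
    exact ⟨v, fun x _ p _ _ => Subsingleton.elim x v ▸ p.start_mem_support⟩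
  | inr _ =>
    choose a b hφab using hφ
    have hG : G.IsIntervalRepresentation a b := fun u w => by simpa only [hφab] using hadj u w
    obtain ⟨v, hv⟩ := hG.exists_mem_support_forall_isLongestPath hconn.preconnected
    exact ⟨v, fun x y p hp hmax => hv p ⟨hp, hmax⟩⟩
end

section
/- Let P and Q be two longest chains in a finite family F of sets, where a chain is a sequence of distinct members of F with consecutive members intersecting. Suppose P = P_1 X P_2 and Q = Q_1 Y Q_2 with X ≠ Y, and that C_1 = P_1 X R Y Q_1^r and C_2 = P_2^r X R Y Q_2 are both chains, where R is a (possibly empty) chain of arcs none of which lie in P or Q and whose first member intersects X and last member intersects Y. Then |C_1| + |C_2| = |P| + |Q| + 2|R| + 2 ≥ |P| + |Q| + 2, so at least one of C_1, C_2 is strictly longer than P — contradiction; hence such a configuration cannot occur for longest chains. -/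
/-- A chain in a family `F` of sets: a list of distinct members of `F` in which
consecutive members intersect. -/
def SChain {α : Type*} (F : Set (Set α)) (P : List (Set α)) : Prop :=
  P.Nodup ∧ (∀ A ∈ P, A ∈ F) ∧ List.Chain' (fun X Y => (X ∩ Y).Nonempty) P

/-- If `P = P₁ X P₂` and `Q = Q₁ Y Q₂` are longest chains in `F` with `X ≠ Y`, `R` is a
chain of members of `F` lying neither in `P` nor in `Q`, and both
`C₁ = P₁ X R Y Q₁ʳ` and `C₂ = P₂ʳ X R Y Q₂` are chains, then
`|C₁| + |C₂| = |P| + |Q| + 2|R| + 2`, and such a configuration is impossible. -/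
theorem stmt14 {α : Type*} (F : Finset (Set α)) (P1 P2 Q1 Q2 R : List (Set α))
    (X Y : Set α)
    (hP : SChain ((F : Finset (Set α)) : Set (Set α)) (P1 ++ X :: P2))
    (hPmax : ∀ Q, SChain ((F : Finset (Set α)) : Set (Set α)) Q → Q.length ≤ (P1 ++ X :: P2).length)
    (hQ : SChain ((F : Finset (Set α)) : Set (Set α)) (Q1 ++ Y :: Q2))
    (hQmax : ∀ Q', SChain ((F : Finset (Set α)) : Set (Set α)) Q' → Q'.length ≤ (Q1 ++ Y :: Q2).length)
    (hXY : X ≠ Y)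
    (hR : ∀ A ∈ R, A ∈ F ∧ A ∉ P1 ++ X :: P2 ∧ A ∉ Q1 ++ Y :: Q2)
    (hC1 : SChain ((F : Finset (Set α)) : Set (Set α)) (P1 ++ X :: (R ++ Y :: Q1.reverse)))
    (hC2 : SChain ((F : Finset (Set α)) : Set (Set α)) (P2.reverse ++ X :: (R ++ Y :: Q2))) :
    ((P1 ++ X :: (R ++ Y :: Q1.reverse)).length
        + (P2.reverse ++ X :: (R ++ Y :: Q2)).length
      = (P1 ++ X :: P2).length + (Q1 ++ Y :: Q2).length + 2 * R.length + 2) ∧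
    False := by
  have h1 := hPmax _ hC1
  have h2 := hQmax _ hC2
  simp only [List.length_append, List.length_cons, List.length_reverse] at *
  omega
end

section
/- Let x_1 < x_2 < ... < x_{t+1} be real numbers and let J_1, ..., J_t be distinct open intervals with x_k, x_{k+1} ∈ J_k for all k. Suppose p < q ≤ t, ℓ(J_q) < ℓ(J_p) < r(J_q) < r(J_p) (where ℓ, r denote left and right endpoints). If [x_p, x_{p+1}] ∪ [x_q, x_{q+1}] ⊆ J_p ∩ J_q, then swapping J_p and J_q yields a sequence in which consecutive intervals still intersect. -/
/-- Swapping `J p` and `J q` (with the stated endpoint configuration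
`ℓ(J q) < ℓ(J p) < r(J q) < r(J p)` and `[x p, x (p+1)] ∪ [x q, x (q+1)] ⊆ J p ∩ J q`)
yields a sequence in which consecutive intervals still intersect. -/
theorem stmt15 (t : ℕ) (x : ℕ → ℝ) (l r : ℕ → ℝ) (J : ℕ → Set ℝ)
    (hx : ∀ k, k + 1 ≤ t → x k < x (k + 1))
    (hJ : ∀ k < t, J k = Set.Ioo (l k) (r k))
    (hdist : ∀ j k, j < t → k < t → J j = J k → j = k)
    (hmem : ∀ k < t, x k ∈ J k ∧ x (k + 1) ∈ J k)
    (p q : ℕ) (hpq : p < q) (hqt : q < t)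
    (hend : l q < l p ∧ l p < r q ∧ r q < r p)
    (hsub : Set.Icc (x p) (x (p + 1)) ∪ Set.Icc (x q) (x (q + 1)) ⊆ J p ∩ J q) :
    ∀ k, k + 1 < t →
      ((J ∘ Equiv.swap p q) k ∩ (J ∘ Equiv.swap p q) (k + 1)).Nonempty := by
  intro k hk
  have hxp1 : x p ≤ x (p + 1) := (hx p (by omega)).le
  have hxq1 : x q ≤ x (q + 1) := (hx q (by omega)).le
  have hxp : x p ∈ J p ∩ J q := hsub (Or.inl ⟨le_refl _, hxp1⟩)
  have hxp' : x (p + 1) ∈ J p ∩ J q := hsub (Or.inl ⟨hxp1, le_refl _⟩)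
  have hxq : x q ∈ J p ∩ J q := hsub (Or.inr ⟨le_refl _, hxq1⟩)
  have hxq' : x (q + 1) ∈ J p ∩ J q := hsub (Or.inr ⟨hxq1, le_refl _⟩)
  have sp : Equiv.swap p q p = q := Equiv.swap_apply_left p q
  have sq : Equiv.swap p q q = p := Equiv.swap_apply_right p q
  have so : ∀ m, m ≠ p → m ≠ q → Equiv.swap p q m = m := fun m h h' =>
    Equiv.swap_apply_of_ne_of_ne h h'
  rcases eq_or_ne k p with hkp | hkp
  · rcases eq_or_ne (p + 1) q with h | h
    · simp only [Function.comp, hkp, sp, h, sq]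
      exact ⟨x p, hxp.2, hxp.1⟩
    · simp only [Function.comp, hkp, sp, so (p + 1) (by omega) h]
      exact ⟨x (p + 1), hxp'.2, (hmem (p + 1) (by omega)).1⟩
  rcases eq_or_ne k q with hkq | hkq
  · simp only [Function.comp, hkq, sq, so (q + 1) (by omega) (by omega)]
    exact ⟨x (q + 1), hxq'.1, (hmem (q + 1) (by omega)).1⟩
  simp only [Function.comp, so k hkp hkq]
  rcases eq_or_ne (k + 1) p with h | h
  · rw [h, sp]
    exact ⟨x (k + 1), (hmem k (by omega)).2, by rw [h]; exact hxp.2⟩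
  rcases eq_or_ne (k + 1) q with h' | h'
  · rw [h', sq]
    exact ⟨x (k + 1), (hmem k (by omega)).2, by rw [h']; exact hxq.1⟩
  · rw [so (k + 1) h h']
    exact ⟨x (k + 1), (hmem k (by omega)).2, (hmem (k + 1) (by omega)).1⟩
end

section
/- Let K_0, ..., K_{n−1} be open arcs of a circle C covering C, chosen so that n is minimal among subfamilies of a family F covering C and no K_i is contained in another arc of F, cyclically ordered clockwise, with n ≥ 3. Let A ∈ F satisfy ΔK_a ⊆ A and A ≠ K_a, K_{a+1}, where ΔK_a = K_a ∩ K_{a+1}. Then the six points ℓ(K_a), ℓ(A), ℓ(K_{a+1}), r(K_a), r(A), r(K_{a+1}) occur consecutively in clockwise order on C. -/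
noncomputable section

namespace Stmt16Aux
open Set

instance : Fact ((0:ℝ) < 1) := ⟨one_pos⟩

noncomputable def τ (b x : Circ) : ℝ := (AddCircle.equivIco 1 0 (x - b) : ℝ)

lemma τ_mem (b x : Circ) : τ b x ∈ Ico (0:ℝ) 1 := by
  have := (AddCircle.equivIco 1 0 (x - b)).2
  simpa [τ] using this

lemma coe_τ (b x : Circ) : b + ((τ b x : ℝ) : Circ) = x := by
  have h : (((AddCircle.equivIco 1 0 (x - b) : ℝ)) : Circ) = x - b := by
    exact (AddCircle.equivIco 1 0).symm_apply_apply (x - b)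
  rw [τ, h]; abel

lemma τ_coe (b : Circ) (r : ℝ) : τ b (b + (r : Circ)) = Int.fract r := by
  unfold τ
  rw [add_sub_cancel_left]
  simpa using AddCircle.coe_equivIco_mk_apply (p := (1:ℝ)) r

lemma τ_inj {b x y : Circ} (h : τ b x = τ b y) : x = y := by
  rw [← coe_τ b x, ← coe_τ b y, h]

lemma coe_eq_coe {r s : ℝ} : ((r : Circ) = (s : Circ)) ↔ ∃ k : ℤ, r - s = k := by
  constructor
  · intro h
    have h2 : ((r - s : ℝ) : Circ) = 0 := by
      rw [sub_eq_add_neg, AddCircle.coe_add, h, ← AddCircle.coe_add]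
      simp
    obtain ⟨k, hk⟩ := (AddCircle.coe_eq_zero_iff (1:ℝ)).1 h2
    exact ⟨k, by simpa [zsmul_eq_mul] using hk.symm⟩
  · rintro ⟨k, hk⟩
    have hr : r = s + (k:ℝ) * 1 := by linarith
    rw [hr, AddCircle.coe_add,
      show ((((k:ℝ)) * 1 : ℝ) : Circ) = 0 from (AddCircle.coe_eq_zero_iff (1:ℝ)).2 ⟨k, by simp [zsmul_eq_mul]⟩]
    simp

lemma fract_self {r : ℝ} (h0 : 0 ≤ r) (h1 : r < 1) : Int.fract r = r :=
  Int.fract_eq_self.2 ⟨h0, h1⟩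

lemma fract_neg' {r : ℝ} (h0 : -1 ≤ r) (h1 : r < 0) : Int.fract r = r + 1 := by
  have : Int.fract (r + ((1:ℤ):ℝ)) = Int.fract r := Int.fract_add_intCast r 1
  rw [← this]
  push_cast
  exact fract_self (by linarith) (by linarith)

lemma mem_arc_iff {b p x : Circ} {e : ℝ} (he1 : e ≤ 1) :
    x ∈ arc p e ↔ Int.fract (τ b x - τ b p) ∈ Ioo 0 e := by
  constructor
  · rintro ⟨t, ht, rfl⟩
    have hx : p + (t : Circ) = b + ((τ b p + t : ℝ) : Circ) := by
      rw [AddCircle.coe_add, ← add_assoc, coe_τ]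
    simp only []
    rw [hx, τ_coe]
    have h1 : Int.fract (τ b p + t) = τ b p + t - ⌊(τ b p + t : ℝ)⌋ := rfl
    have h2 : Int.fract (Int.fract (τ b p + t) - τ b p) = Int.fract t := by
      rw [h1, show τ b p + t - ⌊(τ b p + t : ℝ)⌋ - τ b p = t - ⌊(τ b p + t : ℝ)⌋ by ring,
        Int.fract_sub_intCast]
    rw [h2, fract_self (le_of_lt ht.1) (lt_of_lt_of_le ht.2 he1)]
    exact ht
  · intro h
    refine ⟨Int.fract (τ b x - τ b p), h, ?_⟩
    have : p + ((Int.fract (τ b x - τ b p) : ℝ) : Circ)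
        = b + ((τ b p + Int.fract (τ b x - τ b p) : ℝ) : Circ) := by
      rw [AddCircle.coe_add, ← add_assoc, coe_τ]
    show p + _ = x
    rw [this]
    have : ((τ b p + Int.fract (τ b x - τ b p) : ℝ) : Circ) = ((τ b x : ℝ) : Circ) := by
      rw [coe_eq_coe]
      exact ⟨-⌊(τ b x - τ b p : ℝ)⌋, by rw [Int.fract]; push_cast; ring⟩
    rw [this, coe_τ]

end Stmt16Aux

open Stmt16Aux in
set_option maxHeartbeats 1000000 in
/-- Six-point configuration: if `ΔK_a = K_a ∩ K_{a+1} ⊆ A` for an arc `A ∈ F` distinct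
from `K_a` and `K_{a+1}`, then `ℓ(K_a), ℓ(A), ℓ(K_{a+1}), r(K_a), r(A), r(K_{a+1})`
occur consecutively in clockwise order on the circle. -/
theorem stmt16 (F : Finset (Set Circ)) (hF : ∀ A ∈ F, IsArc A)
    (n : ℕ) [NeZero n] (hn : 3 ≤ n) (K : Fin n → Set Circ)
    (c : Fin n → Circ) (d : Fin n → ℝ)
    (hKarc : ∀ i, K i = arc (c i) (d i) ∧ 0 < d i ∧ d i < 1)
    (hKF : ∀ i, K i ∈ F) (hKinj : Function.Injective K)
    (hKcov : (⋃ i, K i) = Set.univ)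
    (hmin : ∀ (m : ℕ) (K' : Fin m → Set Circ), (∀ j, K' j ∈ F) →
      (⋃ j, K' j) = Set.univ → n ≤ m)
    (hnosub : ∀ i, ∀ A ∈ F, K i ⊆ A → K i = A)
    (hord : CyclicallyOrdered c)
    (a : Fin n) (A : Set Circ) (hAF : A ∈ F) (α : Circ) (δ : ℝ)
    (hAarc : A = arc α δ ∧ 0 < δ ∧ δ < 1)
    (hΔ : K a ∩ K (a + 1) ⊆ A) (hA1 : A ≠ K a) (hA2 : A ≠ K (a + 1))
    (hdist : Function.Injective
      ![c a, α, c (a + 1), c a + (↑(d a) : Circ), α + (↑δ : Circ),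
        c (a + 1) + (↑(d (a + 1)) : Circ)]) :
    CyclicallyOrdered
      ![c a, α, c (a + 1), c a + (↑(d a) : Circ), α + (↑δ : Circ),
        c (a + 1) + (↑(d (a + 1)) : Circ)] := by
  classical
  obtain ⟨hAeq, hδ0, hδ1⟩ := hAarc
  obtain ⟨hKaE, hda0, hda1⟩ := hKarc a
  obtain ⟨hKbE, hdb0, hdb1⟩ := hKarc (a+1)
  have hd' : ∀ i j : Fin 6, i ≠ j →
      (![c a, α, c (a + 1), c a + (↑(d a) : Circ), α + (↑δ : Circ),
        c (a + 1) + (↑(d (a + 1)) : Circ)] i ≠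
       ![c a, α, c (a + 1), c a + (↑(d a) : Circ), α + (↑δ : Circ),
        c (a + 1) + (↑(d (a + 1)) : Circ)] j) := fun i j hij h => hij (hdist h)
  have haa1 : a + 1 ≠ a := by
    intro h
    have h' : a + 1 = a + 0 := by simpa using h
    have h1 : (1 : Fin n) = 0 := add_left_cancel h'
    have := Fin.one_eq_zero_iff.1 h1
    omega
  obtain ⟨L1, hL1def⟩ : ∃ L1, τ (c a) (c (a+1)) = L1 := ⟨_, rfl⟩
  obtain ⟨w, hwdef⟩ : ∃ w, τ (c a) α = w := ⟨_, rfl⟩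
  have hτ0 : τ (c a) (c a) = 0 := by
    have h := τ_coe (c a) 0
    simpa using h
  have hL1mem : L1 ∈ Set.Ico (0:ℝ) 1 := hL1def ▸ τ_mem (c a) (c (a+1))
  have hwmem : w ∈ Set.Ico (0:ℝ) 1 := hwdef ▸ τ_mem (c a) α
  have hL1pos : 0 < L1 := by
    rcases eq_or_lt_of_le hL1mem.1 with h | h
    · exfalso
      apply hd' 2 0 (by decide)
      show c (a+1) = c a
      exact τ_inj (by rw [hτ0, hL1def, ← h])
    · exact h
  have hwpos : 0 < w := by
    rcases eq_or_lt_of_le hwmem.1 with h | h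
    · exfalso
      apply hd' 1 0 (by decide)
      show α = c a
      exact τ_inj (by rw [hτ0, hwdef, ← h])
    · exact h
  have hwneL1 : w ≠ L1 := by
    intro h
    apply hd' 1 2 (by decide)
    show α = c (a+1)
    exact τ_inj (by rw [hwdef, hL1def, h])
  have memK : ∀ (i : Fin n) (x : Circ),
      x ∈ K i ↔ Int.fract (τ (c a) x - τ (c a) (c i)) ∈ Set.Ioo 0 (d i) := by
    intro i x
    rw [(hKarc i).1]
    exact mem_arc_iff (le_of_lt (hKarc i).2.2)
  have memKa : ∀ x : Circ, x ∈ K a ↔ Int.fract (τ (c a) x) ∈ Set.Ioo 0 (d a) := by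
    intro x
    rw [memK a x, hτ0, sub_zero]
  have memKb : ∀ x : Circ,
      x ∈ K (a+1) ↔ Int.fract (τ (c a) x - L1) ∈ Set.Ioo 0 (d (a+1)) := by
    intro x
    rw [memK (a+1) x, hL1def]
  have memA : ∀ x, x ∈ A ↔ Int.fract (τ (c a) x - w) ∈ Set.Ioo 0 δ := by
    intro x
    rw [hAeq, hwdef.symm]
    exact mem_arc_iff hδ1.le
  have τpt : ∀ s : ℝ, 0 ≤ s → s < 1 → τ (c a) (c a + (↑s : Circ)) = s := by
    intro s h0 h1
    rw [τ_coe, fract_self h0 h1]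
  -- cyclic order: all other left endpoints are at least L1 away
  have hD2 : ∀ j : Fin n, j ≠ a → L1 ≤ τ (c a) (c j) := by
    obtain ⟨b0, t, htmono, htmem, htpt⟩ := hord
    have τcj : ∀ j : Fin n, τ (c a) (c j) = Int.fract (t j - t a) := by
      intro j
      have heq : t a + (t j - t a) = t j := by ring
      have hcj : c j = c a + ((t j - t a : ℝ) : Circ) := by
        rw [htpt j, htpt a, add_assoc, ← AddCircle.coe_add, heq]
      rw [hcj, τ_coe]
    have hfrneg : ∀ j : Fin n, j < a → Int.fract (t j - t a) = t j - t a + 1 := by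
      intro j hj
      have h1 : t j < t a := htmono hj
      exact fract_neg' (by linarith [(htmem j).1, (htmem a).2]) (by linarith)
    intro j hj
    rw [← hL1def, τcj, τcj]
    have hval : ((a+1 : Fin n)).val = (a.val + 1) % n := by
      rw [Fin.add_def, Fin.val_one']
      have h2 : a.val < n := a.isLt
      have h3 : 1 % n = 1 := Nat.mod_eq_of_lt (by omega)
      rw [h3]
    rcases lt_or_ge (a.val + 1) n with hlt | hge
    · have ha1 : ((a+1 : Fin n)).val = a.val + 1 := by
        rw [hval, Nat.mod_eq_of_lt hlt]
      have h1 : t a < t (a+1) := htmono (by rw [Fin.lt_def, ha1]; omega)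
      have hfa1 : Int.fract (t (a+1) - t a) = t (a+1) - t a :=
        fract_self (by linarith) (by linarith [(htmem (a+1)).2, (htmem a).1])
      rw [hfa1]
      rcases lt_or_gt_of_ne (fun h : j = a => hj h) with hja | hja
      · rw [hfrneg j hja]
        linarith [(htmem (a+1)).2, (htmem j).1]
      · have hle : a + 1 ≤ j := by
          rw [Fin.le_def, ha1]
          exact hja
        have h2 := htmono.monotone hle
        have hfj : Int.fract (t j - t a) = t j - t a :=
          fract_self (by linarith [htmono hja]) (by linarith [(htmem j).2, (htmem a).1])
        rw [hfj]
        linarith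
    · have han : a.val + 1 = n := by have := a.isLt; omega
      have ha1 : ((a+1 : Fin n)).val = 0 := by
        rw [hval, han, Nat.mod_self]
      have hja : j < a := by
        rw [Fin.lt_def]
        have h4 := j.isLt
        rcases Nat.lt_or_ge j.val a.val with h | h
        · exact h
        · exfalso; apply hj; apply Fin.ext; omega
      have h0a : (a+1 : Fin n) < a := by
        rw [Fin.lt_def, ha1]
        omega
      rw [hfrneg j hja, hfrneg (a+1) h0a]
      have hle : (a+1 : Fin n) ≤ j := by
        rw [Fin.le_def, ha1]
        omega
      linarith [htmono.monotone hle]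
  -- Step 1 : L1 < d a
  have hconsec : L1 < d a := by
    by_contra hcon
    push_neg at hcon
    have hxmem : (c a + ((d a : ℝ) : Circ)) ∈ ⋃ i, K i := by rw [hKcov]; trivial
    obtain ⟨j, hj⟩ := Set.mem_iUnion.1 hxmem
    rw [memK, τpt (d a) hda0.le hda1] at hj
    by_cases hja : j = a
    · subst hja
      rw [hτ0, sub_zero, fract_self hda0.le hda1] at hj
      exact absurd hj.2 (lt_irrefl _)
    · have huj : d a ≤ τ (c a) (c j) := le_trans hcon (hD2 j hja)
      rcases eq_or_lt_of_le huj with he | hlt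
      · rw [← he, sub_self, Int.fract_zero] at hj
        exact absurd hj.1 (lt_irrefl _)
      · have hu1 : τ (c a) (c j) < 1 := (τ_mem _ _).2
        rw [fract_neg' (by linarith) (by linarith)] at hj
        have hsub : K a ⊆ K j := by
          intro x hx
          rw [memKa] at hx
          rw [memK]
          have hs0 : 0 ≤ τ (c a) x := (τ_mem _ _).1
          have hs1 : τ (c a) x < 1 := (τ_mem _ _).2
          rw [fract_self hs0 hs1] at hx
          rw [fract_neg' (by linarith [hx.2]) (by linarith [hx.2])]
          exact ⟨by linarith [hx.1], by linarith [hx.2, hj.2]⟩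
        exact hja (hKinj (hnosub a (K j) (hKF j) hsub)).symm
  -- Step 2 : d a < L1 + d (a+1)
  have hP2 : d a < L1 + d (a+1) := by
    by_contra hcon
    push_neg at hcon
    have hsub : K (a+1) ⊆ K a := by
      intro x hx
      rw [memKb] at hx
      rw [memKa]
      have hs0 : 0 ≤ τ (c a) x := (τ_mem _ _).1
      have hs1 : τ (c a) x < 1 := (τ_mem _ _).2
      rcases lt_trichotomy L1 (τ (c a) x) with hc | hc | hc
      · rw [fract_self (by linarith) (by linarith)] at hx
        rw [fract_self hs0 hs1]
        exact ⟨by linarith, by linarith [hx.2]⟩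
      · rw [← hc, sub_self, Int.fract_zero] at hx
        exact absurd hx.1 (lt_irrefl _)
      · rw [fract_neg' (by linarith [hL1mem.2]) (by linarith)] at hx
        exfalso
        linarith [hx.2, hda1]
    exact haa1 (hKinj (hnosub (a+1) (K a) (hKF a) hsub))
  -- Step 3 : L1 + d (a+1) < 1
  have hcb : c (a+1) = c a + ((L1 : ℝ) : Circ) := by
    rw [← hL1def, coe_τ]
  have hrKb : c (a+1) + ((d (a+1) : ℝ) : Circ) = c a + ((L1 + d (a+1) : ℝ) : Circ) := by
    rw [hcb, add_assoc, ← AddCircle.coe_add]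
  have hP3 : L1 + d (a+1) < 1 := by
    rcases lt_trichotomy (L1 + d (a+1)) 1 with h | h | h
    · exact h
    · exfalso
      apply hd' 5 0 (by decide)
      show c (a+1) + ((d (a+1) : ℝ) : Circ) = c a
      rw [hrKb, h]
      simp [AddCircle.coe_period]
    · exfalso
      have hcov2 : (⋃ j : Fin 2, (![K a, K (a+1)] : Fin 2 → Set Circ) j) = Set.univ := by
        rw [Set.eq_univ_iff_forall]
        intro x
        rw [Set.mem_iUnion]
        have hs0 : 0 ≤ τ (c a) x := (τ_mem _ _).1
        have hs1 : τ (c a) x < 1 := (τ_mem _ _).2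
        by_cases hs : 0 < τ (c a) x ∧ τ (c a) x < d a
        · refine ⟨0, ?_⟩
          show x ∈ K a
          rw [memKa, fract_self hs0 hs1]
          exact hs
        · refine ⟨1, ?_⟩
          show x ∈ K (a+1)
          rw [memKb]
          push_neg at hs
          rcases eq_or_lt_of_le hs0 with h0 | h0
          · rw [← h0, zero_sub, fract_neg' (by linarith [hL1mem.2]) (by linarith)]
            exact ⟨by linarith [hL1mem.2], by linarith⟩
          · have hda : d a ≤ τ (c a) x := hs h0
            rw [fract_self (by linarith) (by linarith)]
            exact ⟨by linarith, by linarith⟩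
      have := hmin 2 ![K a, K (a+1)] (by
        intro j
        fin_cases j
        · exact hKF a
        · exact hKF (a+1)) hcov2
      omega
  -- Delta inclusion in coordinates
  have hΔ' : ∀ s : ℝ, L1 < s → s < d a → Int.fract (s - w) ∈ Set.Ioo 0 δ := by
    intro s h1 h2
    have hs0 : 0 ≤ s := by linarith
    have hs1 : s < 1 := by linarith
    have hx : (c a + ((s : ℝ) : Circ)) ∈ A := by
      apply hΔ
      constructor
      · rw [memKa, τpt s hs0 hs1, fract_self hs0 hs1]
        exact ⟨by linarith, h2⟩
      · rw [memKb, τpt s hs0 hs1, fract_self (by linarith) (by linarith)]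
        exact ⟨by linarith, by linarith⟩
    rw [memA, τpt s hs0 hs1] at hx
    exact hx
  -- sup auxiliary
  have hsupaux : ∀ (cc B : ℝ), L1 < cc → (∀ s, L1 < s → s < cc → s ≤ B) → cc ≤ B := by
    intro cc B hc hall
    by_contra hcon
    push_neg at hcon
    have hmax : max B L1 < cc := max_lt hcon hc
    have h1 : L1 < (max B L1 + cc)/2 := by
      have := le_max_right B L1
      linarith
    have h2 : (max B L1 + cc)/2 < cc := by linarith
    have h3 := hall _ h1 h2
    have := le_max_left B L1
    linarith
  -- Step 4 : w < L1
  have hwL1 : w < L1 := by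
    rcases lt_trichotomy w L1 with h | h | h
    · exact h
    · exact absurd h hwneL1
    · exfalso
      rcases le_or_gt w (d a) with hwe | hwe
      · have hall : ∀ s, L1 < s → s < w → s ≤ w + δ - 1 := by
          intro s h1 h2
          have h3 : s < d a := lt_of_lt_of_le h2 hwe
          have h4 := hΔ' s h1 h3
          rw [fract_neg' (by linarith [hwmem.2]) (by linarith)] at h4
          linarith [h4.2]
        have := hsupaux w (w + δ - 1) h hall
        linarith
      · have hall : ∀ s, L1 < s → s < d a → s ≤ w + δ - 1 := by
          intro s h1 h2
          have h4 := hΔ' s h1 h2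
          rw [fract_neg' (by linarith [hwmem.2]) (by linarith)] at h4
          linarith [h4.2]
        have hsup := hsupaux (d a) (w + δ - 1) hconsec hall
        have hsub : K a ⊆ A := by
          intro x hx
          rw [memKa] at hx
          rw [memA]
          have hs0 : 0 ≤ τ (c a) x := (τ_mem _ _).1
          have hs1 : τ (c a) x < 1 := (τ_mem _ _).2
          rw [fract_self hs0 hs1] at hx
          rw [fract_neg' (by linarith [hwmem.2, hx.2]) (by linarith [hx.2])]
          exact ⟨by linarith [hwmem.2], by linarith [hx.2]⟩
        exact hA1 (hnosub a A hAF hsub).symm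
  -- Step 5 : d a < w + δ
  have hP7 : d a ≤ w + δ := by
    refine hsupaux (d a) (w + δ) hconsec ?_
    intro s h1 h2
    have h4 := hΔ' s h1 h2
    rw [fract_self (by linarith) (by linarith)] at h4
    linarith [h4.2]
  have hrA : α + ((δ : ℝ) : Circ) = c a + ((w + δ : ℝ) : Circ) := by
    rw [← hwdef]
    conv_lhs => rw [← coe_τ (c a) α]
    rw [add_assoc, ← AddCircle.coe_add]
  have hP8 : d a < w + δ := by
    rcases eq_or_lt_of_le hP7 with h | h
    · exfalso
      apply hd' 3 4 (by decide)
      show c a + ((d a : ℝ) : Circ) = α + ((δ : ℝ) : Circ)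
      rw [hrA, ← h]
    · exact h
  -- Step 6 : w + δ < L1 + d (a+1)
  have hP9 : w + δ < L1 + d (a+1) := by
    by_contra hcon
    push_neg at hcon
    have hsub : K (a+1) ⊆ A := by
      intro x hx
      rw [memKb] at hx
      rw [memA]
      have hs0 : 0 ≤ τ (c a) x := (τ_mem _ _).1
      have hs1 : τ (c a) x < 1 := (τ_mem _ _).2
      rcases lt_trichotomy (τ (c a) x) L1 with hc | hc | hc
      · rw [fract_neg' (by linarith [hL1mem.2]) (by linarith)] at hx
        have hsw : τ (c a) x < w := by linarith [hx.2]
        rw [fract_neg' (by linarith [hwmem.2]) (by linarith)]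
        exact ⟨by linarith [hwmem.2], by linarith [hx.2]⟩
      · rw [hc, sub_self, Int.fract_zero] at hx
        exact absurd hx.1 (lt_irrefl _)
      · rw [fract_self (by linarith) (by linarith)] at hx
        rw [fract_self (by linarith) (by linarith [hwpos])]
        exact ⟨by linarith, by linarith [hx.2]⟩
    exact hA2 (hnosub (a+1) A hAF hsub).symm
  -- Final assembly
  refine ⟨c a, ![0, w, L1, d a, w + δ, L1 + d (a+1)], ?_, ?_, ?_⟩
  · intro i j hij
    fin_cases i <;> fin_cases j <;>
      first
        | exact absurd hij (by decide)
        | (show (0:ℝ) < w; linarith)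
        | (show (0:ℝ) < L1; linarith)
        | (show (0:ℝ) < d a; linarith)
        | (show (0:ℝ) < w + δ; linarith)
        | (show (0:ℝ) < L1 + d (a+1); linarith)
        | (show w < L1; linarith)
        | (show w < d a; linarith)
        | (show w < w + δ; linarith)
        | (show w < L1 + d (a+1); linarith)
        | (show L1 < d a; linarith)
        | (show L1 < w + δ; linarith)
        | (show L1 < L1 + d (a+1); linarith)
        | (show d a < w + δ; linarith)
        | (show d a < L1 + d (a+1); linarith)
        | (show w + δ < L1 + d (a+1); linarith)
  · intro i
    rw [Set.mem_Ico]
    fin_cases i <;> exact ⟨by norm_num <;> linarith, by norm_num <;> linarith⟩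
  · intro i
    fin_cases i
    · show c a = c a + ((0:ℝ) : Circ)
      simp
    · show α = c a + ((w:ℝ) : Circ)
      rw [← hwdef, coe_τ]
    · show c (a+1) = c a + ((L1:ℝ) : Circ)
      exact hcb
    · show c a + ((d a : ℝ) : Circ) = c a + ((d a : ℝ) : Circ)
      rfl
    · show α + ((δ:ℝ) : Circ) = c a + ((w + δ : ℝ) : Circ)
      exact hrA
    · show c (a+1) + ((d (a+1):ℝ) : Circ) = c a + ((L1 + d (a+1) : ℝ) : Circ)
      exact hrKb


end
end
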